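/- arXiv:1310.4987 — 4 statements merged into one kernel-verified Lean document; each statement's English description precedes it below -/
import Mathlib

section
/- Let A ⊇ B ⊇ C be a left relative H-separable tower. If B ⊇ C is H-separable (H-depth 1), then D = A^C is centrally projective over R = A^B (depth 1), i.e., D ⊕ * ≅ R^t as R-R-bimodules. -/
/-!  A noncommutative relative tensor product `L ⊗_C R` for a ring `C` mapping
into rings `L` (acting on the right through `f`) and `R` (acting on the left
through `g`), together with the outer left `L`-action `lact`, the outer right
`R`-action `ract`, a lifting principle for balanced biadditive maps, and the
multiplication map. -/

open scoped TensorProduct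

noncomputable section
namespace NCT

variable {C L R : Type*} [Ring C] [Ring L] [Ring R]

/-- The submodule of relations `(l * f c) ⊗ r - l ⊗ (g c * r)`. -/
def rel (f : C →+* L) (g : C →+* R) : Submodule ℤ (L ⊗[ℤ] R) :=
  Submodule.span ℤ
    {x | ∃ (l : L) (c : C) (r : R), x = (l * f c) ⊗ₜ[ℤ] r - l ⊗ₜ[ℤ] (g c * r)}

/-- The relative tensor product `L ⊗_C R`. -/
def Tens (f : C →+* L) (g : C →+* R) : Type _ := (L ⊗[ℤ] R) ⧸ rel f g

instance (f : C →+* L) (g : C →+* R) : AddCommGroup (Tens f g) :=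
  inferInstanceAs (AddCommGroup ((L ⊗[ℤ] R) ⧸ rel f g))

variable (f : C →+* L) (g : C →+* R)

/-- The canonical image of `l ⊗ r` in `L ⊗_C R`. -/
def tmul (l : L) (r : R) : Tens f g := Submodule.Quotient.mk (l ⊗ₜ[ℤ] r)

lemma tmul_rel (l : L) (c : C) (r : R) :
    tmul f g (l * f c) r = tmul f g l (g c * r) := by
  refine (Submodule.Quotient.eq _).2 ?_
  exact Submodule.subset_span ⟨l, c, r, rfl⟩

lemma tmul_add_left (l l' : L) (r : R) :
    tmul f g (l + l') r = tmul f g l r + tmul f g l' r := by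
  show Submodule.Quotient.mk _ = _
  rw [TensorProduct.add_tmul, Submodule.Quotient.mk_add]; rfl

lemma tmul_add_right (l : L) (r r' : R) :
    tmul f g l (r + r') = tmul f g l r + tmul f g l r' := by
  show Submodule.Quotient.mk _ = _
  rw [TensorProduct.tmul_add, Submodule.Quotient.mk_add]; rfl

/-- Package a biadditive map as a bundled `AddMonoidHom`-valued hom. -/
def mkBilin {M N P : Type*} [AddCommGroup M] [AddCommGroup N] [AddCommGroup P]
    (φ : M → N → P)
    (h1 : ∀ m m' n, φ (m + m') n = φ m n + φ m' n)
    (h2 : ∀ m n n', φ m (n + n') = φ m n + φ m n') : M →+ N →+ P :=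
  AddMonoidHom.mk' (fun m => AddMonoidHom.mk' (φ m) (h2 m))
    (fun m m' => by ext n; exact h1 m m' n)

@[simp] lemma mkBilin_apply {M N P : Type*} [AddCommGroup M] [AddCommGroup N] [AddCommGroup P]
    (φ : M → N → P) (h1 h2) (m : M) (n : N) : mkBilin φ h1 h2 m n = φ m n := rfl

/-- Lift a balanced biadditive map to the relative tensor product. -/
def lift {P : Type*} [AddCommGroup P] (φ : L →+ R →+ P)
    (hbal : ∀ l c r, φ (l * f c) r = φ l (g c * r)) : Tens f g →+ P :=
  (Submodule.liftQ (rel f g)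
    (TensorProduct.liftAddHom φ (by
      intro n l r
      simp only [AddMonoidHom.map_zsmul, AddMonoidHom.smul_apply]) ).toIntLinearMap
    (by
      rw [rel, Submodule.span_le]
      rintro x ⟨l, c, r, rfl⟩
      simp only [SetLike.mem_coe, LinearMap.mem_ker, AddMonoidHom.coe_toIntLinearMap,
        map_sub, TensorProduct.liftAddHom_tmul]
      rw [hbal, sub_self])).toAddMonoidHom

@[simp] lemma lift_tmul {P : Type*} [AddCommGroup P] (φ : L →+ R →+ P)
    (hbal : ∀ l c r, φ (l * f c) r = φ l (g c * r)) (l : L) (r : R) :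
    lift f g φ hbal (tmul f g l r) = φ l r := rfl

/-- The outer left action of `L` on `L ⊗_C R`. -/
def lact (l : L) : Tens f g →+ Tens f g :=
  lift f g (mkBilin (fun l' r => tmul f g (l * l') r)
      (fun a b r => by rw [mul_add, tmul_add_left])
      (fun a r s => by rw [tmul_add_right]))
    (fun l' c r => by simp only [mkBilin_apply]; rw [← mul_assoc, tmul_rel])

@[simp] lemma lact_tmul (l l' : L) (r : R) :
    lact f g l (tmul f g l' r) = tmul f g (l * l') r := rfl

/-- The outer right action of `R` on `L ⊗_C R`. -/
def ract (r : R) : Tens f g →+ Tens f g :=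
  lift f g (mkBilin (fun l' r' => tmul f g l' (r' * r))
      (fun a b r' => by rw [tmul_add_left])
      (fun a r' s => by rw [add_mul, tmul_add_right]))
    (fun l' c r' => by simp only [mkBilin_apply]; rw [tmul_rel, mul_assoc])

@[simp] lemma ract_tmul (r r' : R) (l : L) :
    ract f g r (tmul f g l r') = tmul f g l (r' * r) := rfl

/-- The map induced on relative tensor products by a ring map on the left factor. -/
def mapLeft {L' : Type*} [Ring L'] (h : L →+* L') :
    Tens f g →+ Tens (h.comp f) g :=
  lift f g (mkBilin (fun l r => tmul (h.comp f) g (h l) r)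
      (fun a b r => by rw [map_add, tmul_add_left])
      (fun a r s => by rw [tmul_add_right]))
    (fun l c r => by
      simp only [mkBilin_apply, map_mul]
      exact tmul_rel (h.comp f) g (h l) c r)

@[simp] lemma mapLeft_tmul {L' : Type*} [Ring L'] (h : L →+* L') (l : L) (r : R) :
    mapLeft f g h (tmul f g l r) = tmul (h.comp f) g (h l) r := rfl

/-- The multiplication map `L ⊗_C R → R`, `l ⊗ r ↦ jl l * r`, for a ring map
`jl : L → R` compatible with the two maps from `C`. -/
def mulMap (jl : L →+* R) (hcomp : ∀ c, jl (f c) = g c) : Tens f g →+ R :=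
  lift f g (mkBilin (fun l r => jl l * r)
      (fun a b r => by rw [map_add, add_mul])
      (fun a r s => by rw [mul_add]))
    (fun l c r => by simp only [mkBilin_apply]; rw [map_mul, hcomp, mul_assoc])

@[simp] lemma mulMap_tmul (jl : L →+* R) (hcomp : ∀ c, jl (f c) = g c) (l : L) (r : R) :
    mulMap f g jl hcomp (tmul f g l r) = jl l * r := rfl

/-- Induction principle: every element of `L ⊗_C R` is built from `tmul`s. -/
lemma tens_induction {p : Tens f g → Prop} (zero : p 0)
    (tm : ∀ l r, p (tmul f g l r)) (add : ∀ x y, p x → p y → p (x + y)) :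
    ∀ x, p x := by
  intro x
  obtain ⟨y, rfl⟩ := Submodule.Quotient.mk_surjective _ x
  induction y using TensorProduct.induction_on with
  | zero => exact zero
  | tmul l r => exact tm l r
  | add a b ha hb =>
      rw [Submodule.Quotient.mk_add]
      exact add _ _ ha hb

end NCT
end

noncomputable section
open NCT

/-- The tower `A ⊇ B ⊇ C` (given by injective ring maps `ι : C → B`, `j : B → A`) is
*left relative H-separable*: `B ⊗_C A ⊕ * ≅ A^n` as `B`-`A`-bimodules. -/
def LeftRelHSep {C B A : Type*} [Ring C] [Ring B] [Ring A]
    (ι : C →+* B) (j : B →+* A) (n : ℕ) : Prop :=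
  ∃ (i : Tens ι (j.comp ι) →+ (Fin n → A)) (p : (Fin n → A) →+ Tens ι (j.comp ι)),
    (∀ (b : B) x, i (lact ι (j.comp ι) b x) = fun k => j b * i x k) ∧
    (∀ (a : A) x, i (ract ι (j.comp ι) a x) = fun k => i x k * a) ∧
    (∀ (b : B) v, p (fun k => j b * v k) = lact ι (j.comp ι) b (p v)) ∧
    (∀ (a : A) v, p (fun k => v k * a) = ract ι (j.comp ι) a (p v)) ∧
    ∀ x, p (i x) = x

/-- `B` is a *left relative separable extension of `C` in `A`*: the multiplication map
`μ : B ⊗_C A → A` splits as a `B`-`A`-bimodule epimorphism. -/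
def LeftRelSep {C B A : Type*} [Ring C] [Ring B] [Ring A]
    (ι : C →+* B) (j : B →+* A) : Prop :=
  ∃ σ : A →+ Tens ι (j.comp ι),
    (∀ (b : B) (a : A), σ (j b * a) = lact ι (j.comp ι) b (σ a)) ∧
    (∀ (a a' : A), σ (a * a') = ract ι (j.comp ι) a' (σ a)) ∧
    ∀ a, mulMap ι (j.comp ι) j (fun _ => rfl) (σ a) = a

/-- `B ⊇ C` is a separable extension: there is a `B`-central element
`e ∈ B ⊗_C B` with `μ(e) = 1`. -/
def IsSepExt {C B : Type*} [Ring C] [Ring B] (ι : C →+* B) : Prop :=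
  ∃ e : Tens ι ι, (∀ b : B, lact ι ι b e = ract ι ι b e) ∧
    mulMap ι ι (RingHom.id B) (fun _ => rfl) e = 1

/-! H-separability of `B ⊇ C`, read off the split pair `i`, `p`, gives `1 ⊗ 1 = Σ z_k r_k`
with `z_k = p (e_k)` `B`-central and `r_k = i (1 ⊗ 1)_k` centralizing `C`. For `d ∈ D = A^C`
the sandwich `x ↦ x¹ d x²` is well defined on `B ⊗_C B` because `d` commutes with `C`; it
is `R`-`R`-linear in `d` for `R = A^B`, takes `B`-central tensors into `R`, and applied to
`1 ⊗ 1 = Σ z_k r_k` it yields the dual basis `d = Σ (z_k¹ d z_k²) r_k`. -/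

section HSeparable

variable {C B : Type*} [Ring C] [Ring B] {ι : C →+* B} {t : ℕ}

lemma lact_tmul_one_one_eq_ract (c : C) :
    lact ι ι (ι c) (tmul ι ι 1 1) = ract ι ι (ι c) (tmul ι ι 1 1) := by
  simpa using tmul_rel ι ι 1 c 1

lemma commute_apply_tmul_one_one (i : Tens ι ι →+ (Fin t → B))
    (hil : ∀ (b : B) x, i (lact ι ι b x) = fun k => b * i x k)
    (hir : ∀ (b : B) x, i (ract ι ι b x) = fun k => i x k * b) (c : C) (k : Fin t) :
    Commute (ι c) (i (tmul ι ι 1 1) k) := by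
  have h := congrFun (congrArg i (lact_tmul_one_one_eq_ract c)) k
  rwa [hil, hir] at h

lemma lact_apply_single_eq_ract (p : (Fin t → B) →+ Tens ι ι)
    (hpl : ∀ (b : B) v, p (fun k => b * v k) = lact ι ι b (p v))
    (hpr : ∀ (b : B) v, p (fun k => v k * b) = ract ι ι b (p v)) (b : B) (k : Fin t) :
    lact ι ι b (p (Pi.single k 1)) = ract ι ι b (p (Pi.single k 1)) := by
  have hcomm : (fun m => b * (Pi.single k 1 : Fin t → B) m) =
      fun m => (Pi.single k 1 : Fin t → B) m * b := by
    funext m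
    by_cases hm : m = k <;> simp [hm]
  rw [← hpl, ← hpr, hcomm]

lemma sum_ract_apply_single (i : Tens ι ι →+ (Fin t → B)) (p : (Fin t → B) →+ Tens ι ι)
    (hpr : ∀ (b : B) v, p (fun k => v k * b) = ract ι ι b (p v)) (hpi : ∀ x, p (i x) = x)
    (x : Tens ι ι) : ∑ k, ract ι ι (i x k) (p (Pi.single k 1)) = x := by
  calc ∑ k, ract ι ι (i x k) (p (Pi.single k 1))
      = ∑ k, p (Pi.single k (i x k)) := by
        refine Finset.sum_congr rfl fun k _ => ?_
        rw [← hpr]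
        congr 1
        funext m
        by_cases hm : m = k <;> simp [hm]
    _ = p (i x) := by rw [← map_sum, Finset.univ_sum_single]
    _ = x := hpi x

end HSeparable

section Sandwich

variable {C B A : Type*} [Ring C] [Ring B] [Ring A] (ι : C →+* B) (j : B →+* A)

def sandwich (d : Subring.centralizer (Set.range (j.comp ι))) : Tens ι ι →+ A :=
  lift ι ι (mkBilin (fun b b' => j b * d * j b')
      (fun _ _ _ => by rw [map_add, add_mul, add_mul])
      (fun _ _ _ => by rw [map_add, mul_add]))
    (fun b c b' => by
      have hd : j (ι c) * d = d * j (ι c) :=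
        Subring.mem_centralizer_iff.mp d.2 _ ⟨c, rfl⟩
      simp only [mkBilin_apply, map_mul, mul_assoc]
      rw [← mul_assoc (j (ι c)), hd, mul_assoc])

variable {ι j}

@[simp] lemma sandwich_tmul (d : Subring.centralizer (Set.range (j.comp ι))) (b b' : B) :
    sandwich ι j d (tmul ι ι b b') = j b * d * j b' := rfl

lemma sandwich_lact (d : Subring.centralizer (Set.range (j.comp ι))) (b : B) (x : Tens ι ι) :
    sandwich ι j d (lact ι ι b x) = j b * sandwich ι j d x := by
  induction x using tens_induction with
  | zero => simp
  | tm => simp [mul_assoc]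
  | add x y hx hy => simp [hx, hy, mul_add]

lemma sandwich_ract (d : Subring.centralizer (Set.range (j.comp ι))) (b : B) (x : Tens ι ι) :
    sandwich ι j d (ract ι ι b x) = sandwich ι j d x * j b := by
  induction x using tens_induction with
  | zero => simp
  | tm => simp [mul_assoc]
  | add x y hx hy => simp [hx, hy, add_mul]

lemma sandwich_add (d d' : Subring.centralizer (Set.range (j.comp ι))) (x : Tens ι ι) :
    sandwich ι j (d + d') x = sandwich ι j d x + sandwich ι j d' x := by
  induction x using tens_induction with
  | zero => simp
  | tm => simp [mul_add, add_mul]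
  | add x y hx hy => simp only [map_add, hx, hy]; abel

lemma sandwich_mul_left {r d : Subring.centralizer (Set.range (j.comp ι))}
    (hr : ∀ b, Commute (j b) r) (x : Tens ι ι) :
    sandwich ι j (r * d) x = r * sandwich ι j d x := by
  induction x using tens_induction with
  | zero => simp
  | tm b b' => simp [← mul_assoc, (hr b).eq]
  | add x y hx hy => simp [hx, hy, mul_add]

lemma sandwich_mul_right {r d : Subring.centralizer (Set.range (j.comp ι))}
    (hr : ∀ b, Commute (j b) r) (x : Tens ι ι) :
    sandwich ι j (d * r) x = sandwich ι j d x * r := by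
  induction x using tens_induction with
  | zero => simp
  | tm b b' => simp [mul_assoc, (hr b').eq]
  | add x y hx hy => simp [hx, hy, add_mul]

lemma sandwich_mem_centralizer (d : Subring.centralizer (Set.range (j.comp ι)))
    {x : Tens ι ι} (hx : ∀ b, lact ι ι b x = ract ι ι b x) :
    sandwich ι j d x ∈ Subring.centralizer (Set.range j) := by
  rw [Subring.mem_centralizer_iff]
  rintro _ ⟨b, rfl⟩
  rw [← sandwich_lact, hx, sandwich_ract]

end Sandwich

lemma map_mem_centralizer_range_comp {C B A : Type*} [Ring C] [Ring B] [Ring A]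
    {ι : C →+* B} (j : B →+* A) {b : B} (hb : ∀ c, Commute (ι c) b) :
    j b ∈ Subring.centralizer (Set.range (j.comp ι)) := by
  rw [Subring.mem_centralizer_iff]
  rintro _ ⟨c, rfl⟩
  simp only [RingHom.coe_comp, Function.comp_apply, ← map_mul, (hb c).eq]

theorem centralizer_centrallyProjective_of_hSep_general
    {C B A : Type*} [Ring C] [Ring B] [Ring A]
    (ι : C →+* B) (j : B →+* A)
    (hRD : Subring.centralizer (Set.range j) ≤ Subring.centralizer (Set.range (j.comp ι)))
    (hHsepBC : ∃ (t : ℕ) (i : Tens ι ι →+ (Fin t → B)) (p : (Fin t → B) →+ Tens ι ι),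
      (∀ (b : B) x, i (lact ι ι b x) = fun k => b * i x k) ∧
      (∀ (b : B) x, i (ract ι ι b x) = fun k => i x k * b) ∧
      (∀ (b : B) v, p (fun k => b * v k) = lact ι ι b (p v)) ∧
      (∀ (b : B) v, p (fun k => v k * b) = ract ι ι b (p v)) ∧
      ∀ x, p (i x) = x) :
    ∃ (t : ℕ)
      (h : Fin t → (↥(Subring.centralizer (Set.range (j.comp ι))) →+
        ↥(Subring.centralizer (Set.range j))))
      (w : Fin t → ↥(Subring.centralizer (Set.range (j.comp ι)))),
      (∀ (k : Fin t) (r : ↥(Subring.centralizer (Set.range j))),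
        w k * Subring.inclusion hRD r = Subring.inclusion hRD r * w k) ∧
      (∀ (k : Fin t) (r : ↥(Subring.centralizer (Set.range j)))
          (d : ↥(Subring.centralizer (Set.range (j.comp ι)))),
        h k (Subring.inclusion hRD r * d) = r * h k d) ∧
      (∀ (k : Fin t) (r : ↥(Subring.centralizer (Set.range j)))
          (d : ↥(Subring.centralizer (Set.range (j.comp ι)))),
        h k (d * Subring.inclusion hRD r) = h k d * r) ∧
      ∀ d : ↥(Subring.centralizer (Set.range (j.comp ι))),
        d = ∑ k, Subring.inclusion hRD (h k d) * w k := by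
  obtain ⟨t, i, p, hil, hir, hpl, hpr, hpi⟩ := hHsepBC
  set z : Fin t → Tens ι ι := fun k => p (Pi.single k 1)
  set r : Fin t → B := i (tmul ι ι 1 1)
  have hz k : ∀ b, lact ι ι b (z k) = ract ι ι b (z k) :=
    (lact_apply_single_eq_ract p hpl hpr · k)
  have hR (s : Subring.centralizer (Set.range j)) (b : B) :
      Commute (j b) (Subring.inclusion hRD s) :=
    Subring.mem_centralizer_iff.mp s.2 _ ⟨b, rfl⟩
  refine ⟨t, fun k => AddMonoidHom.mk'
      (fun d => ⟨sandwich ι j d (z k), sandwich_mem_centralizer d (hz k)⟩)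
      (fun d d' => Subtype.ext (sandwich_add d d' (z k))),
    fun k => ⟨j (r k),
      map_mem_centralizer_range_comp j (commute_apply_tmul_one_one i hil hir · k)⟩,
    fun k s => Subtype.ext (hR s (r k)).eq,
    fun k s _ => Subtype.ext (sandwich_mul_left (hR s) (z k)),
    fun k s _ => Subtype.ext (sandwich_mul_right (hR s) (z k)), fun d => Subtype.ext ?_⟩
  calc (d : A) = sandwich ι j d (∑ k, ract ι ι (r k) (z k)) := by
        rw [sum_ract_apply_single i p hpr hpi]; simp
    _ = ∑ k, sandwich ι j d (z k) * j (r k) := by simp only [map_sum, sandwich_ract]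
    _ = _ := by push_cast; rfl

/-- in a left relative H-separable tower `A ⊇ B ⊇ C`, if `B ⊇ C` is
H-separable then `D = A^C` is centrally projective over `R = A^B`, stated via the
centrally projective dual basis criterion: there are `R`-`R`-bimodule maps
`h_i : D → R` and elements `w_i ∈ D^R` with `d = Σ h_i(d) w_i`. -/
theorem centralizer_centrallyProjective_of_hSep
    {C B A : Type*} [Ring C] [Ring B] [Ring A]
    (ι : C →+* B) (j : B →+* A)
    (hι : Function.Injective ι) (hj : Function.Injective j)
    (hRD : Subring.centralizer (Set.range j) ≤ Subring.centralizer (Set.range (j.comp ι)))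
    (hH : ∃ n, LeftRelHSep ι j n)
    (hHsepBC : ∃ (t : ℕ) (i : Tens ι ι →+ (Fin t → B)) (p : (Fin t → B) →+ Tens ι ι),
      (∀ (b : B) x, i (lact ι ι b x) = fun k => b * i x k) ∧
      (∀ (b : B) x, i (ract ι ι b x) = fun k => i x k * b) ∧
      (∀ (b : B) v, p (fun k => b * v k) = lact ι ι b (p v)) ∧
      (∀ (b : B) v, p (fun k => v k * b) = ract ι ι b (p v)) ∧
      ∀ x, p (i x) = x) :
    ∃ (t : ℕ)
      (h : Fin t → (↥(Subring.centralizer (Set.range (j.comp ι))) →+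
        ↥(Subring.centralizer (Set.range j))))
      (w : Fin t → ↥(Subring.centralizer (Set.range (j.comp ι)))),
      (∀ (k : Fin t) (r : ↥(Subring.centralizer (Set.range j))),
        w k * Subring.inclusion hRD r = Subring.inclusion hRD r * w k) ∧
      (∀ (k : Fin t) (r : ↥(Subring.centralizer (Set.range j)))
          (d : ↥(Subring.centralizer (Set.range (j.comp ι)))),
        h k (Subring.inclusion hRD r * d) = r * h k d) ∧
      (∀ (k : Fin t) (r : ↥(Subring.centralizer (Set.range j)))
          (d : ↥(Subring.centralizer (Set.range (j.comp ι)))),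
        h k (d * Subring.inclusion hRD r) = h k d * r) ∧
      ∀ d : ↥(Subring.centralizer (Set.range (j.comp ι))),
        d = ∑ k, Subring.inclusion hRD (h k d) * w k :=
  centralizer_centrallyProjective_of_hSep_general ι j hRD hHsepBC

end
end

section
/- Suppose A is a finitely generated projective algebra over a commutative ring K and B is a separable K-subalgebra of A such that A is a progenerator as a B-A-bimodule (equivalently, μ : B ⊗_K A → A splits and _B A_A is a generator). Then A ⊇ B is left normal, i.e., A ⊗_B A ⊕ * ≅ A^q as B-A-bimodules for some q ∈ ℕ (the left depth 2 condition). -/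
/-!  A noncommutative relative tensor product `L ⊗_C R` for a ring `C` mapping
into rings `L` (acting on the right through `f`) and `R` (acting on the left
through `g`), together with the outer left `L`-action `lact`, the outer right
`R`-action `ract`, a lifting principle for balanced biadditive maps, and the
multiplication map. -/

open scoped TensorProduct

noncomputable section
open NCT

/-!
Separability of `B` makes `A ⊗_B A` a bimodule direct summand of `A ⊗_K A`: for a separability
element `e ∈ B ⊗_K B`, `a ⊗ a' ↦ a e a'` splits the projection because `μ(e) = 1`. The splitting
`σ` of `μ : B ⊗_K A → A` and a finite dual basis `(x_k, φ_k)` of `A` over `K` make `A ⊗_K A` a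
summand of `(B ⊗_K A)^m`, via `a ⊗ a' ↦ ((id ⊗ φ_k)(σ a) ⊗ a')_k` and
`(b_k ⊗ a_k)_k ↦ Σ_k b_k x_k ⊗ a_k`. Finally `B ⊗_K A` is a summand of `A^n` since `A` is a
generator, so `A ⊗_B A` is a summand of `A^(mn)`.
-/

theorem exists_finite_dual_basis (R M : Type*) [Semiring R] [AddCommMonoid M] [Module R M]
    [Module.Finite R M] [Module.Projective R M] :
    ∃ (m : ℕ) (x : Fin m → M) (φ : Fin m → M →ₗ[R] R), ∀ a, ∑ k, φ k a • x k = a := by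
  obtain ⟨m, v, u, -, -, hvu⟩ := Module.Finite.exists_comp_eq_id_of_projective R M
  refine ⟨m, fun k => v (Pi.single k 1), fun k => LinearMap.proj k ∘ₗ u, fun a => ?_⟩
  calc ∑ k, (LinearMap.proj k ∘ₗ u) a • v (Pi.single k 1)
      = v (∑ k, Pi.single k (u a k)) := by
        simp only [LinearMap.comp_apply, LinearMap.proj_apply, map_sum]
        congr! with k
        rw [← map_smul, ← Pi.single_smul', smul_eq_mul, mul_one]
    _ = a := by rw [Finset.univ_sum_single, ← LinearMap.comp_apply, hvu, LinearMap.id_apply]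

section EquivariantRetract

variable {S T M N P : Type*} [AddCommGroup M] [AddCommGroup N] [AddCommGroup P]

/-- A `B`-`A`-bimodule is encoded by its family of operators indexed by `S = B ⊕ A` (left
multiplications by `B`, right multiplications by `A`), so that this is a bimodule direct summand. -/
def IsEquivariantRetract (opM : S → M →+ M) (opN : S → N →+ N) : Prop :=
  ∃ (i : M →+ N) (p : N →+ M), (∀ s x, i (opM s x) = opN s (i x)) ∧
    (∀ s y, p (opN s y) = opM s (p y)) ∧ ∀ x, p (i x) = x

variable {opM : S → M →+ M} {opN : S → N →+ N} {opP : S → P →+ P}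

theorem IsEquivariantRetract.trans (h₁ : IsEquivariantRetract opM opN)
    (h₂ : IsEquivariantRetract opN opP) : IsEquivariantRetract opM opP := by
  obtain ⟨i₁, p₁, hi₁, hp₁, hpi₁⟩ := h₁
  obtain ⟨i₂, p₂, hi₂, hp₂, hpi₂⟩ := h₂
  exact ⟨i₂.comp i₁, p₁.comp p₂, fun s x => by simp [hi₁, hi₂], fun s y => by simp [hp₁, hp₂],
    fun x => by simp [hpi₁, hpi₂]⟩

theorem IsEquivariantRetract.comp (h : IsEquivariantRetract opM opN) (φ : T → S) :
    IsEquivariantRetract (opM ∘ φ) (opN ∘ φ) := by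
  obtain ⟨i, p, hi, hp, hpi⟩ := h
  exact ⟨i, p, fun t => hi (φ t), fun t => hp (φ t), hpi⟩

def piOps (op : S → M →+ M) (ι : Type*) : S → (ι → M) →+ (ι → M) :=
  fun s => (op s).compLeft ι

@[simp]
theorem piOps_apply (op : S → M →+ M) {ι : Type*} (s : S) (w : ι → M) (k : ι) :
    piOps op ι s w k = op s (w k) := rfl

theorem IsEquivariantRetract.pi (h : IsEquivariantRetract opM opN) (ι : Type*) :
    IsEquivariantRetract (piOps opM ι) (piOps opN ι) := by
  obtain ⟨i, p, hi, hp, hpi⟩ := h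
  exact ⟨i.compLeft ι, p.compLeft ι, fun s x => funext fun k => hi s (x k),
    fun s y => funext fun k => hp s (y k), fun x => funext fun k => hpi (x k)⟩

theorem isEquivariantRetract_piCurry (op : S → M →+ M) {ι κ τ : Type*} (e : ι × κ ≃ τ) :
    IsEquivariantRetract (piOps (piOps op κ) ι) (piOps op τ) :=
  ⟨AddMonoidHom.mk' (fun w t => w (e.symm t).1 (e.symm t).2) fun _ _ => rfl,
    AddMonoidHom.mk' (fun v a b => v (e (a, b))) fun _ _ => rfl,
    fun _ _ => rfl, fun _ _ => rfl, fun _ => by simp⟩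

theorem isEquivariantRetract_sum_iff {B A : Type*} {opM : B ⊕ A → M →+ M}
    {opN : B ⊕ A → N →+ N} :
    IsEquivariantRetract opM opN ↔ ∃ (i : M →+ N) (p : N →+ M),
      (∀ b x, i (opM (.inl b) x) = opN (.inl b) (i x)) ∧
      (∀ a x, i (opM (.inr a) x) = opN (.inr a) (i x)) ∧
      (∀ b y, p (opN (.inl b) y) = opM (.inl b) (p y)) ∧
      (∀ a y, p (opN (.inr a) y) = opM (.inr a) (p y)) ∧ ∀ x, p (i x) = x := by
  simp only [IsEquivariantRetract, Sum.forall, and_assoc]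

end EquivariantRetract

def mulOps (A : Type*) [Ring A] : A ⊕ A → A →+ A :=
  Sum.elim AddMonoidHom.mulLeft AddMonoidHom.mulRight

namespace NCT

section Actions

variable {C L R : Type*} [Ring C] [Ring L] [Ring R] (f : C →+* L) (g : C →+* R)

@[ext]
theorem hom_ext {P : Type*} [AddCommGroup P] {F G : Tens f g →+ P}
    (h : ∀ l r, F (tmul f g l r) = G (tmul f g l r)) : F = G :=
  AddMonoidHom.ext <|
    tens_induction f g (by simp) h fun x y hx hy => by rw [map_add, map_add, hx, hy]

theorem tmul_zero (l : L) : tmul f g l 0 = 0 := by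
  simpa using tmul_add_right f g l 0 0

theorem zero_tmul (r : R) : tmul f g 0 r = 0 := by
  simpa using tmul_add_left f g 0 0 r

theorem tmul_sum_left {ι : Type*} (s : Finset ι) (l : ι → L) (r : R) :
    tmul f g (∑ i ∈ s, l i) r = ∑ i ∈ s, tmul f g (l i) r :=
  map_sum (AddMonoidHom.mk' (tmul f g · r) fun l l' => tmul_add_left f g l l' r) l s

theorem lact_add (l l' : L) : lact f g (l + l') = lact f g l + lact f g l' := by
  ext l₀ r
  simp [add_mul, tmul_add_left]

theorem ract_add (r r' : R) : ract f g (r + r') = ract f g r + ract f g r' := by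
  ext l r₀
  simp [mul_add, tmul_add_right]

theorem lact_lact (l l' : L) (x : Tens f g) : lact f g l (lact f g l' x) = lact f g (l * l') x := by
  induction x using tens_induction with
  | zero => simp
  | tm l₀ r => simp [mul_assoc]
  | add x y hx hy => simp only [map_add, hx, hy]

theorem ract_ract (r r' : R) (x : Tens f g) : ract f g r (ract f g r' x) = ract f g (r' * r) x := by
  induction x using tens_induction with
  | zero => simp
  | tm l r₀ => simp [mul_assoc]
  | add x y hx hy => simp only [map_add, hx, hy]

theorem lact_ract_comm (l : L) (r : R) (x : Tens f g) :
    lact f g l (ract f g r x) = ract f g r (lact f g l x) := by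
  induction x using tens_induction with
  | zero => simp
  | tm l₀ r₀ => rfl
  | add x y hx hy => simp only [map_add, hx, hy]

def tensOps : L ⊕ R → Tens f g →+ Tens f g :=
  Sum.elim (lact f g) (ract f g)

@[simp]
theorem tensOps_inl (l : L) : tensOps f g (.inl l) = lact f g l := rfl

@[simp]
theorem tensOps_inr (r : R) : tensOps f g (.inr r) = ract f g r := rfl

end Actions

section Map

variable {C L R C' L' R' : Type*} [Ring C] [Ring L] [Ring R] [Ring C'] [Ring L'] [Ring R']
  {f : C →+* L} {g : C →+* R} {f' : C' →+* L'} {g' : C' →+* R'}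

def map (γ : C → C') (φ : L →+* L') (ψ : R →+* R') (hf : ∀ c, φ (f c) = f' (γ c))
    (hg : ∀ c, ψ (g c) = g' (γ c)) : Tens f g →+ Tens f' g' :=
  lift f g (mkBilin (fun l r => tmul f' g' (φ l) (ψ r))
      (fun l l' r => by rw [map_add, tmul_add_left])
      (fun l r r' => by rw [map_add, tmul_add_right]))
    (fun l c r => by simp only [mkBilin_apply, map_mul, hf, hg]; exact tmul_rel f' g' _ _ _)

variable (γ : C → C') (φ : L →+* L') (ψ : R →+* R') (hf : ∀ c, φ (f c) = f' (γ c))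
  (hg : ∀ c, ψ (g c) = g' (γ c))

@[simp]
theorem map_tmul (l : L) (r : R) : map γ φ ψ hf hg (tmul f g l r) = tmul f' g' (φ l) (ψ r) := rfl

theorem map_lact (l : L) (x : Tens f g) :
    map γ φ ψ hf hg (lact f g l x) = lact f' g' (φ l) (map γ φ ψ hf hg x) := by
  induction x using tens_induction with
  | zero => simp
  | tm l₀ r => simp
  | add x y hx hy => simp only [map_add, hx, hy]

theorem map_ract (r : R) (x : Tens f g) :
    map γ φ ψ hf hg (ract f g r x) = ract f' g' (ψ r) (map γ φ ψ hf hg x) := by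
  induction x using tens_induction with
  | zero => simp
  | tm l r₀ => simp
  | add x y hx hy => simp only [map_add, hx, hy]

end Map

section Separable

variable {C B A : Type*} [Ring C] [Ring B] [Ring A] {ι : C →+* B} {j : B →+* A} {f : C →+* A}

theorem map_map_eq_tmul_one (hf : ∀ c, j (ι c) = f c) (x : Tens ι ι) :
    map ι (.id A) (.id A) (fun c => (hf c).symm) (fun c => (hf c).symm)
        (map id j j hf hf x) =
      tmul j j 1 (j (mulMap ι ι (.id B) (fun _ => rfl) x)) := by
  induction x using tens_induction with
  | zero => simp [tmul_zero]
  | tm b b' => simpa using tmul_rel j j 1 b (j b')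
  | add x y hx hy => simp only [map_add, hx, hy, tmul_add_right]

/-- Well defined on `A ⊗_B A` because `e` commutes with `B`. -/
def sandwich (hf : ∀ c, j (ι c) = f c) (e : Tens ι ι) (he : ∀ b, lact ι ι b e = ract ι ι b e) :
    Tens j j →+ Tens f f :=
  lift j j (mkBilin (fun a a' => lact f f a (ract f f a' (map id j j hf hf e)))
      (fun a a₂ a' => by rw [lact_add, AddMonoidHom.add_apply])
      (fun a a' a₂ => by rw [ract_add, AddMonoidHom.add_apply, map_add]))
    (fun a b a' => by
      simp only [mkBilin_apply]
      rw [← lact_lact, lact_ract_comm, ← map_lact, he, map_ract, ract_ract])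

@[simp]
theorem sandwich_tmul (hf : ∀ c, j (ι c) = f c) (e : Tens ι ι) (he) (a a' : A) :
    sandwich hf e he (tmul j j a a') = lact f f a (ract f f a' (map id j j hf hf e)) := rfl

theorem isEquivariantRetract_tens_of_isSepExt (hf : ∀ c, j (ι c) = f c) (hsep : IsSepExt ι) :
    IsEquivariantRetract (tensOps j j) (tensOps f f) := by
  obtain ⟨e, he, hμe⟩ := hsep
  refine ⟨sandwich hf e he, map ι (.id A) (.id A) (fun c => (hf c).symm) (fun c => (hf c).symm),
    ?_, fun s x => ?_, fun x => ?_⟩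
  · rintro (a | a) x <;> induction x using tens_induction with
    | zero => simp
    | tm a₀ a' => simp [lact_lact, lact_ract_comm, ract_ract]
    | add x y hx hy => simp only [map_add, hx, hy]
  · cases s <;> simp [map_lact, map_ract]
  · induction x using tens_induction with
    | zero => simp
    | tm a a' => simp [map_lact, map_ract, map_map_eq_tmul_one hf, hμe]
    | add x y hx hy => simp only [map_add, hx, hy]

end Separable

section Projective

variable {K B A : Type*} [CommRing K] [Ring B] [Ring A] [Algebra K B] [Algebra K A]

def contractRight (φ : A →ₗ[K] K) : Tens (algebraMap K B) (algebraMap K A) →+ B :=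
  lift _ _ (mkBilin (fun b x => b * algebraMap K B (φ x))
      (fun b b' x => add_mul b b' _)
      (fun b x x' => by rw [map_add, map_add, mul_add]))
    (fun b c x => by
      simp only [mkBilin_apply]
      rw [φ.map_algebraMap_mul, Algebra.algebraMap_self, RingHom.id_apply, map_mul, mul_assoc])

@[simp]
theorem contractRight_tmul (φ : A →ₗ[K] K) (b : B) (x : A) :
    contractRight φ (tmul (algebraMap K B) (algebraMap K A) b x) = b * algebraMap K B (φ x) := rfl

theorem contractRight_lact (φ : A →ₗ[K] K) (b : B) (y : Tens (algebraMap K B) (algebraMap K A)) :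
    contractRight φ (lact _ _ b y) = b * contractRight φ y := by
  induction y using tens_induction with
  | zero => simp
  | tm b₀ x => simp [mul_assoc]
  | add y y' hy hy' => simp only [map_add, hy, hy', mul_add]

theorem contractRight_ract_algebraMap (φ : A →ₗ[K] K) (c : K)
    (y : Tens (algebraMap K B) (algebraMap K A)) :
    contractRight φ (ract _ _ (algebraMap K A c) y) = contractRight φ y * algebraMap K B c := by
  induction y using tens_induction with
  | zero => simp
  | tm b x =>
    simp only [ract_tmul, contractRight_tmul]
    rw [← Algebra.commutes c x, φ.map_algebraMap_mul, Algebra.algebraMap_self,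
      RingHom.id_apply, map_mul, mul_assoc, Algebra.commutes c (algebraMap K B (φ x))]
  | add y y' hy hy' => simp only [map_add, hy, hy', add_mul]

def mapMulRight (j : B →ₐ[K] A) (y : A) :
    Tens (algebraMap K B) (algebraMap K A) →+ Tens (algebraMap K A) (algebraMap K A) :=
  lift _ _ (mkBilin (fun b x => tmul (algebraMap K A) (algebraMap K A) (j b * y) x)
      (fun b b' x => by rw [map_add, add_mul, tmul_add_left])
      (fun b x x' => tmul_add_right _ _ _ x x'))
    (fun b c x => by
      simp only [mkBilin_apply]
      rw [map_mul, j.commutes, mul_assoc, Algebra.commutes, ← mul_assoc]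
      exact tmul_rel _ _ _ c x)

@[simp]
theorem mapMulRight_tmul (j : B →ₐ[K] A) (y : A) (b : B) (x : A) :
    mapMulRight j y (tmul (algebraMap K B) (algebraMap K A) b x) =
      tmul (algebraMap K A) (algebraMap K A) (j b * y) x := rfl

theorem mapMulRight_lact (j : B →ₐ[K] A) (y : A) (b : B)
    (w : Tens (algebraMap K B) (algebraMap K A)) :
    mapMulRight j y (lact _ _ b w) = lact _ _ (j b) (mapMulRight j y w) := by
  induction w using tens_induction with
  | zero => simp
  | tm b₀ x => simp [mul_assoc]
  | add w w' hw hw' => simp only [map_add, hw, hw']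

theorem mapMulRight_ract (j : B →ₐ[K] A) (y a : A) (w : Tens (algebraMap K B) (algebraMap K A)) :
    mapMulRight j y (ract _ _ a w) = ract _ _ a (mapMulRight j y w) := by
  induction w using tens_induction with
  | zero => simp
  | tm b x => simp
  | add w w' hw hw' => simp only [map_add, hw, hw']

variable {ι : Type*}

theorem sum_mapMulRight_tmul_contractRight [Fintype ι] (j : B →ₐ[K] A) (x : ι → A)
    (φ : ι → A →ₗ[K] K) (hdual : ∀ a, ∑ k, φ k a • x k = a)
    (y : Tens (algebraMap K B) (algebraMap K A)) (a : A) :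
    ∑ k, mapMulRight j (x k) (tmul (algebraMap K B) (algebraMap K A) (contractRight (φ k) y) a) =
      tmul (algebraMap K A) (algebraMap K A)
        (mulMap (algebraMap K B) (algebraMap K A) j.toRingHom (fun c => j.commutes c) y) a := by
  induction y using tens_induction with
  | zero => simp [zero_tmul]
  | tm b x₀ =>
    conv_rhs => rw [mulMap_tmul, ← hdual x₀, Finset.mul_sum, tmul_sum_left]
    simp [mul_assoc, Algebra.smul_def]
  | add y y' hy hy' => simp only [map_add, tmul_add_left, Finset.sum_add_distrib, hy, hy']

def toPiTens (σ : A →+ Tens (algebraMap K B) (algebraMap K A))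
    (hσ : ∀ a a', σ (a * a') = ract _ _ a' (σ a)) (φ : ι → A →ₗ[K] K) :
    Tens (algebraMap K A) (algebraMap K A) →+ (ι → Tens (algebraMap K B) (algebraMap K A)) :=
  lift _ _ (mkBilin (fun a a' k => tmul _ _ (contractRight (φ k) (σ a)) a')
      (fun a a₂ a' => funext fun k => by simp only [map_add, tmul_add_left, Pi.add_apply])
      (fun a a' a₂ => funext fun k => by simp only [tmul_add_right, Pi.add_apply]))
    (fun a c a' => funext fun k => by
      simp only [mkBilin_apply]
      rw [hσ, contractRight_ract_algebraMap]
      exact tmul_rel _ _ _ c a')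

@[simp]
theorem toPiTens_tmul (σ : A →+ Tens (algebraMap K B) (algebraMap K A)) (hσ) (φ : ι → A →ₗ[K] K)
    (a a' : A) (k : ι) :
    toPiTens σ hσ φ (tmul _ _ a a') k = tmul _ _ (contractRight (φ k) (σ a)) a' := rfl

def ofPiTens [Fintype ι] (j : B →ₐ[K] A) (x : ι → A) :
    (ι → Tens (algebraMap K B) (algebraMap K A)) →+ Tens (algebraMap K A) (algebraMap K A) :=
  ∑ k, (mapMulRight j (x k)).comp (Pi.evalAddMonoidHom _ k)

theorem ofPiTens_apply [Fintype ι] (j : B →ₐ[K] A) (x : ι → A)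
    (w : ι → Tens (algebraMap K B) (algebraMap K A)) :
    ofPiTens j x w = ∑ k, mapMulRight j (x k) (w k) := by
  simp [ofPiTens]

theorem isEquivariantRetract_tens_pi_of_dual_basis [Fintype ι] (j : B →ₐ[K] A)
    (σ : A →+ Tens (algebraMap K B) (algebraMap K A))
    (hσl : ∀ b a, σ (j b * a) = lact _ _ b (σ a)) (hσr : ∀ a a', σ (a * a') = ract _ _ a' (σ a))
    (hμσ : ∀ a, mulMap _ _ j.toRingHom (fun c => j.commutes c) (σ a) = a)
    (x : ι → A) (φ : ι → A →ₗ[K] K) (hdual : ∀ a, ∑ k, φ k a • x k = a) :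
    IsEquivariantRetract (tensOps (algebraMap K A) (algebraMap K A) ∘ Sum.map j id)
      (piOps (tensOps (algebraMap K B) (algebraMap K A)) ι) := by
  refine ⟨toPiTens σ hσr φ, ofPiTens j x, ?_, fun s w => ?_, fun t => ?_⟩
  · rintro (b | a) t <;> induction t using tens_induction with
    | zero => simp
    | tm a₀ a' => ext k; simp [hσl, contractRight_lact]
    | add t t' ht ht' => simp only [map_add, ht, ht']
  · cases s <;> simp [ofPiTens_apply, mapMulRight_lact, mapMulRight_ract, map_sum]
  · induction t using tens_induction with
    | zero => simp
    | tm a a' =>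
      simp only [ofPiTens_apply, toPiTens_tmul]
      rw [sum_mapMulRight_tmul_contractRight j x φ hdual, hμσ]
    | add t t' ht ht' => simp only [map_add, ht, ht']

end Projective

end NCT

/-- if `A` is a finitely generated projective algebra over a commutative
ring `K`, `B` is a separable `K`-subalgebra of `A`, and `A` is a progenerator
`B`-`A`-bimodule (`μ : B ⊗_K A → A` splits as `B`-`A`-bimodules and `_B A _A` is a
generator), then `A ⊇ B` is left normal: `A ⊗_B A ⊕ * ≅ A^q` as `B`-`A`-bimodules. -/
theorem leftNormal_of_progenerator
    {K A : Type*} [CommRing K] [Ring A] [Algebra K A]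
    [Module.Finite K A] [Module.Projective K A]
    (B : Subalgebra K A)
    -- `B` is a separable `K`-algebra
    (hsep : ∃ e : Tens (algebraMap K ↥B) (algebraMap K ↥B),
      (∀ b : ↥B, lact (algebraMap K ↥B) (algebraMap K ↥B) b e =
        ract (algebraMap K ↥B) (algebraMap K ↥B) b e) ∧
      mulMap (algebraMap K ↥B) (algebraMap K ↥B) (RingHom.id ↥B) (fun _ => rfl) e = 1)
    -- `μ : B ⊗_K A → A` splits as a `B`-`A`-bimodule epimorphism
    (hsplit : ∃ σ : A →+ Tens (algebraMap K ↥B) (algebraMap K A),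
      (∀ (b : ↥B) (a : A), σ ((b : A) * a) =
        lact (algebraMap K ↥B) (algebraMap K A) b (σ a)) ∧
      (∀ (a a' : A), σ (a * a') = ract (algebraMap K ↥B) (algebraMap K A) a' (σ a)) ∧
      ∀ a, mulMap (algebraMap K ↥B) (algebraMap K A) B.val.toRingHom (fun _ => rfl) (σ a) = a)
    -- `_B A _A` is a generator: the regular bimodule is a direct summand of a power of `A`
    (hgen : ∃ (n : ℕ)
        (i : Tens (algebraMap K ↥B) (algebraMap K A) →+ (Fin n → A))
        (p : (Fin n → A) →+ Tens (algebraMap K ↥B) (algebraMap K A)),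
      (∀ (b : ↥B) x, i (lact (algebraMap K ↥B) (algebraMap K A) b x) = fun k => (b : A) * i x k) ∧
      (∀ (a : A) x, i (ract (algebraMap K ↥B) (algebraMap K A) a x) = fun k => i x k * a) ∧
      (∀ (b : ↥B) v, p (fun k => (b : A) * v k) = lact (algebraMap K ↥B) (algebraMap K A) b (p v)) ∧
      (∀ (a : A) v, p (fun k => v k * a) = ract (algebraMap K ↥B) (algebraMap K A) a (p v)) ∧
      ∀ x, p (i x) = x) :
    ∃ (q : ℕ)
      (i : Tens B.val.toRingHom B.val.toRingHom →+ (Fin q → A))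
      (p : (Fin q → A) →+ Tens B.val.toRingHom B.val.toRingHom),
      (∀ (b : ↥B) x, i (lact B.val.toRingHom B.val.toRingHom (b : A) x) = fun k => (b : A) * i x k) ∧
      (∀ (a : A) x, i (ract B.val.toRingHom B.val.toRingHom a x) = fun k => i x k * a) ∧
      (∀ (b : ↥B) v, p (fun k => (b : A) * v k) = lact B.val.toRingHom B.val.toRingHom (b : A) (p v)) ∧
      (∀ (a : A) v, p (fun k => v k * a) = ract B.val.toRingHom B.val.toRingHom a (p v)) ∧
      ∀ x, p (i x) = x := by
  obtain ⟨σ, hσl, hσr, hμσ⟩ := hsplit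
  obtain ⟨n, hgen⟩ := hgen
  obtain ⟨m, x, φ, hdual⟩ := exists_finite_dual_basis K A
  have hsepR : IsEquivariantRetract (tensOps B.val.toRingHom B.val.toRingHom ∘ Sum.map B.val id)
      (tensOps (algebraMap K A) (algebraMap K A) ∘ Sum.map B.val id) :=
    (isEquivariantRetract_tens_of_isSepExt (fun _ => rfl) hsep).comp _
  have hprojR := isEquivariantRetract_tens_pi_of_dual_basis B.val σ hσl hσr hμσ x φ hdual
  have hgenR : IsEquivariantRetract (tensOps (algebraMap K B) (algebraMap K A))
      (piOps (mulOps A ∘ Sum.map B.val id) (Fin n)) :=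
    isEquivariantRetract_sum_iff.2 hgen
  exact ⟨m * n, isEquivariantRetract_sum_iff.1 <| (hsepR.trans hprojR).trans <|
    (hgenR.pi (Fin m)).trans (isEquivariantRetract_piCurry _ finProdFinEquiv)⟩

end
end

section
/- Suppose a tower of rings A ⊇ B ⊇ C satisfies both the left relative H-separability condition (B ⊗_C A ⊕ * ≅ A^n as B-A-bimodules) and the left relative separability condition (A ⊕ * ≅ B ⊗_C A as B-A-bimodules). Then for every m ≥ 1 the A-A-bimodules A^{⊗_B m} and A^{⊗_C m} are H-equivalent (each is isomorphic to a direct summand of a finite direct sum of copies of the other). -/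
/-!  A noncommutative relative tensor product `L ⊗_C R` for a ring `C` mapping
into rings `L` (acting on the right through `f`) and `R` (acting on the left
through `g`), together with the outer left `L`-action `lact`, the outer right
`R`-action `ract`, a lifting principle for balanced biadditive maps, and the
multiplication map. -/

open scoped TensorProduct

noncomputable section
open NCT

section TensorPowers

variable (A : Type*) [Ring A]

def ZM : ℕ → ModuleCat ℤ
  | 0 => ModuleCat.of ℤ A
  | n + 1 => ModuleCat.of ℤ (A ⊗[ℤ] (ZM n))

abbrev Zc (n : ℕ) : Type _ := (ZM A n : Type _)

def lactZ : ∀ n : ℕ, A → Zc A n →+ Zc A n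
  | 0, a => (AddMonoidHom.mulLeft a : A →+ A)
  | n + 1, a =>
      (LinearMap.rTensor (ZM A n) (AddMonoidHom.mulLeft a).toIntLinearMap).toAddMonoidHom

/-- An additive endomorphism of a `ℤ`-module object, viewed as a `ℤ`-linear map for the
module structure carried by the object (the port of `AddMonoidHom.toIntLinearMap`). -/
def toZLin {M : ModuleCat ℤ} (f : M →+ M) : M →ₗ[ℤ] M where
  toFun := f
  map_add' := map_add f
  map_smul' := fun c x =>
    (congrArg f (int_smul_eq_zsmul M.isModule c x)).trans
      ((map_zsmul f c x).trans (int_smul_eq_zsmul M.isModule c _).symm)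

@[simp] lemma coe_toZLin {M : ModuleCat ℤ} (f : M →+ M) : ⇑(toZLin f) = f := rfl

def ractZ : ∀ n : ℕ, A → Zc A n →+ Zc A n
  | 0, a => (AddMonoidHom.mulRight a : A →+ A)
  | n + 1, a => (LinearMap.lTensor A (toZLin (ractZ n a))).toAddMonoidHom

lemma lactZ_zero (a x : A) : lactZ A 0 a x = a * x := rfl
lemma ractZ_zero (a x : A) : ractZ A 0 a x = x * a := rfl

lemma lactZ_succ (n : ℕ) (a : A) (x : A) (y : Zc A n) :
    lactZ A (n + 1) a (x ⊗ₜ[ℤ] y) = (a * x) ⊗ₜ[ℤ] y := rfl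

lemma ractZ_succ (n : ℕ) (a : A) (x : A) (y : Zc A n) :
    ractZ A (n + 1) a (x ⊗ₜ[ℤ] y) = x ⊗ₜ[ℤ] (ractZ A n a y) := rfl

variable {B' : Type*} [Ring B']

def relZ (h : B' →+* A) : ∀ n : ℕ, Submodule ℤ (Zc A n)
  | 0 => ⊥
  | n + 1 => Submodule.span ℤ
      ({x | ∃ (a : A) (b : B') (z : Zc A n),
          x = (a * h b) ⊗ₜ[ℤ] z - a ⊗ₜ[ℤ] (lactZ A n (h b) z)} ∪
       {x | ∃ (a : A) (z : Zc A n), z ∈ relZ h n ∧ x = a ⊗ₜ[ℤ] z})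

lemma relZ_succ (h : B' →+* A) (n : ℕ) : relZ A h (n + 1) = Submodule.span ℤ
      ({x | ∃ (a : A) (b : B') (z : Zc A n),
          x = (a * h b) ⊗ₜ[ℤ] z - a ⊗ₜ[ℤ] (lactZ A n (h b) z)} ∪
       {x | ∃ (a : A) (z : Zc A n), z ∈ relZ A h n ∧ x = a ⊗ₜ[ℤ] z}) := rfl

lemma commZ : ∀ (n : ℕ) (a a' : A) (z : Zc A n),
    lactZ A n a (ractZ A n a' z) = ractZ A n a' (lactZ A n a z)
  | 0, a, a', z => by exact (mul_assoc a z a').symm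
  | n + 1, a, a', z => by
      induction z using TensorProduct.induction_on with
      | zero => erw [map_zero]
      | tmul x y => rw [ractZ_succ, lactZ_succ, lactZ_succ, ractZ_succ]
      | add u v hu hv => erw [map_add, map_add, hu, hv, map_add, map_add]

lemma lact_rel (h : B' →+* A) :
    ∀ (n : ℕ) (a : A), relZ A h n ≤ (relZ A h n).comap (toZLin (lactZ A n a))
  | 0, a => by simp [relZ]
  | n + 1, a => by
      intro x hx
      show lactZ A (n + 1) a x ∈ relZ A h (n + 1)
      induction hx using Submodule.span_induction with
      | mem y hy =>
        rcases hy with ⟨a', b, z, rfl⟩ | ⟨a', z, hz, rfl⟩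
        · refine Submodule.subset_span (Or.inl ⟨a * a', b, z, ?_⟩)
          erw [map_sub]
          show (a * (a' * h b)) ⊗ₜ[ℤ] z - (a * a') ⊗ₜ[ℤ] (lactZ A n (h b) z) = _
          rw [← mul_assoc]
        · exact Submodule.subset_span (Or.inr ⟨a * a', z, hz, rfl⟩)
      | zero => erw [map_zero]; exact Submodule.zero_mem _
      | add u v _ _ hu hv => erw [map_add]; exact Submodule.add_mem _ hu hv
      | smul c u _ hu => erw [map_zsmul]; exact Submodule.smul_mem _ c hu

lemma ract_rel (h : B' →+* A) :
    ∀ (n : ℕ) (a : A), relZ A h n ≤ (relZ A h n).comap (toZLin (ractZ A n a))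
  | 0, a => by simp [relZ]
  | n + 1, a => by
      intro x hx
      show ractZ A (n + 1) a x ∈ relZ A h (n + 1)
      induction hx using Submodule.span_induction with
      | mem y hy =>
        rcases hy with ⟨a', b, z, rfl⟩ | ⟨a', z, hz, rfl⟩
        · refine Submodule.subset_span (Or.inl ⟨a', b, ractZ A n a z, ?_⟩)
          erw [map_sub]
          show (a' * h b) ⊗ₜ[ℤ] (ractZ A n a z) - a' ⊗ₜ[ℤ] (ractZ A n a (lactZ A n (h b) z)) = _
          rw [← commZ]
        · exact Submodule.subset_span (Or.inr ⟨a', ractZ A n a z, ract_rel h n a hz, rfl⟩)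
      | zero => erw [map_zero]; exact Submodule.zero_mem _
      | add u v _ _ hu hv => erw [map_add]; exact Submodule.add_mem _ hu hv
      | smul c u _ hu => erw [map_zsmul]; exact Submodule.smul_mem _ c hu

def XP (h : B' →+* A) (n : ℕ) : Type _ := Zc A n ⧸ relZ A h n

instance (h : B' →+* A) (n : ℕ) : AddCommGroup (XP A h n) :=
  inferInstanceAs (AddCommGroup (Zc A n ⧸ relZ A h n))

def qlact (h : B' →+* A) (n : ℕ) (a : A) : XP A h n →+ XP A h n :=
  (Submodule.mapQ _ _ (toZLin (lactZ A n a)) (lact_rel A h n a)).toAddMonoidHom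

def qract (h : B' →+* A) (n : ℕ) (a : A) : XP A h n →+ XP A h n :=
  (Submodule.mapQ _ _ (toZLin (ractZ A n a)) (ract_rel A h n a)).toAddMonoidHom

end TensorPowers


/-! Tensoring the hypotheses with `A ⊗_B -` on the left and with `- ⊗_A X` on the right shows,
for every `A`-`A`-bimodule `X`, that `A ⊗_B X` is a direct summand of
`A ⊗_C X ≅ A ⊗_B (B ⊗_C A) ⊗_A X`, and that `A ⊗_C X` is a direct summand of `(A ⊗_B X)^n`.
Since `A^{⊗ (m+1)} = A ⊗ A^{⊗ m}` over `B` and over `C`, induction on `m` finishes the proof: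
if `A^{⊗_B m} ⊕ * ≅ (A^{⊗_C m})^q`, then `A^{⊗_B (m+1)}` is a summand of `(A ⊗_B A^{⊗_C m})^q`,
hence of `(A^{⊗_C (m+1)})^q`; if `A^{⊗_C m} ⊕ * ≅ (A^{⊗_B m})^r`, then `A^{⊗_C (m+1)}` is a
summand of `(A ⊗_B A^{⊗_C m})^n`, hence of `(A^{⊗_B (m+1)})^{nr}`.
On generators `a ⊗ x` the splittings only involve `B`-invariant elements `t_k` of `B ⊗_C A` and
elements `f_k` of `A` centralizing `C`; for H-separability they satisfy `∑ t_k f_k = 1 ⊗ 1`. -/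

section BimodSummand

variable {A M N : Type*} [AddCommGroup M] [AddCommGroup N]

def IsBimodSummandOfPow (lM rM : A → M →+ M) (lN rN : A → N →+ N) (q : ℕ) : Prop :=
  ∃ (i : M →+ (Fin q → N)) (p : (Fin q → N) →+ M),
    (∀ (a : A) x, i (lM a x) = fun k => lN a (i x k)) ∧
    (∀ (a : A) x, i (rM a x) = fun k => rN a (i x k)) ∧
    (∀ (a : A) v, p (fun k => lN a (v k)) = lM a (p v)) ∧
    (∀ (a : A) v, p (fun k => rN a (v k)) = rM a (p v)) ∧
    ∀ x, p (i x) = x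

theorem IsBimodSummandOfPow.refl (l r : A → M →+ M) : IsBimodSummandOfPow l r l r 1 :=
  ⟨AddMonoidHom.pi fun _ => AddMonoidHom.id M, Pi.evalAddMonoidHom _ 0,
    fun _ _ => rfl, fun _ _ => rfl, fun _ _ => rfl, fun _ _ => rfl, fun _ => rfl⟩

theorem IsBimodSummandOfPow.of_sum {lM rM : A → M →+ M} {lN rN : A → N →+ N}
    {κ : Type*} [Fintype κ] (φ : κ → M →+ N) (ψ : κ → N →+ M)
    (hφl : ∀ k a x, φ k (lM a x) = lN a (φ k x)) (hφr : ∀ k a x, φ k (rM a x) = rN a (φ k x))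
    (hψl : ∀ k a y, ψ k (lN a y) = lM a (ψ k y)) (hψr : ∀ k a y, ψ k (rN a y) = rM a (ψ k y))
    (hψφ : ∀ x, ∑ k, ψ k (φ k x) = x) :
    IsBimodSummandOfPow lM rM lN rN (Fintype.card κ) := by
  let e := Fintype.equivFin κ
  refine ⟨AddMonoidHom.pi fun k => φ (e.symm k),
    ∑ k, (ψ (e.symm k)).comp (Pi.evalAddMonoidHom _ k), ?_, ?_, ?_, ?_, ?_⟩
  · intro a x; funext k; exact hφl _ a x
  · intro a x; funext k; exact hφr _ a x
  · intro a v; simp [hψl, map_sum]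
  · intro a v; simp [hψr, map_sum]
  · intro x
    simpa [e.symm.sum_comp fun k => ψ k (φ k x)] using hψφ x

end BimodSummand

theorem map_single_of_map_comp {κ M N : Type*} [DecidableEq κ] [AddCommGroup M] [AddCommGroup N]
    {p : (κ → N) →+ M} {fN : N →+ N} {fM : M →+ M} (hp : ∀ v, p (fun k => fN (v k)) = fM (p v))
    (l : κ) (x : N) : p (Pi.single l (fN x)) = fM (p (Pi.single l x)) := by
  rw [← hp]
  congr 1
  funext k
  exact (Pi.apply_single (fun _ => fN) (fun _ => map_zero fN) l x k).symm

section Tower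

variable {C B A : Type*} [Ring C] [Ring B] [Ring A] {ι : C →+* B} {j : B →+* A}

theorem lact_tmul_one_one (c : C) :
    lact ι (j.comp ι) (ι c) (tmul ι (j.comp ι) 1 1) =
      ract ι (j.comp ι) (j (ι c)) (tmul ι (j.comp ι) 1 1) := by
  have h := tmul_rel ι (j.comp ι) 1 c 1
  rw [one_mul, mul_one] at h
  rw [lact_tmul, ract_tmul, mul_one, one_mul, h, RingHom.comp_apply]

variable {ψ : Tens ι (j.comp ι) →+ A}

theorem map_tmul_eq_mul_map_tmul_one_one
    (hψl : ∀ (b : B) t, ψ (lact ι (j.comp ι) b t) = j b * ψ t)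
    (hψr : ∀ (a : A) t, ψ (ract ι (j.comp ι) a t) = ψ t * a) (b : B) (a : A) :
    ψ (tmul ι (j.comp ι) b a) = j b * ψ (tmul ι (j.comp ι) 1 1) * a := by
  rw [← hψl, ← hψr, lact_tmul, ract_tmul, mul_one, one_mul]

theorem commute_map_tmul_one_one
    (hψl : ∀ (b : B) t, ψ (lact ι (j.comp ι) b t) = j b * ψ t)
    (hψr : ∀ (a : A) t, ψ (ract ι (j.comp ι) a t) = ψ t * a) (c : C) :
    Commute (j (ι c)) (ψ (tmul ι (j.comp ι) 1 1)) := by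
  rw [Commute, SemiconjBy, ← hψl, ← hψr, lact_tmul_one_one]

variable {n : ℕ} {P : (Fin n → A) →+ Tens ι (j.comp ι)}

theorem ract_map_single_one
    (hPr : ∀ (a : A) v, P (fun k => v k * a) = ract ι (j.comp ι) a (P v)) (k : Fin n) (a : A) :
    ract ι (j.comp ι) a (P (Pi.single k 1)) = P (Pi.single k a) := by
  rw [← hPr]
  congr 1
  funext k'
  simp [Pi.single_apply]

theorem lact_map_single_one
    (hPl : ∀ (b : B) v, P (fun k => j b * v k) = lact ι (j.comp ι) b (P v)) (k : Fin n) (b : B) :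
    lact ι (j.comp ι) b (P (Pi.single k 1)) = P (Pi.single k (j b)) := by
  rw [← hPl]
  congr 1
  funext k'
  simp [Pi.single_apply]

theorem LeftRelHSep.exists_sum_ract_eq_tmul_one_one {n : ℕ} (hH : LeftRelHSep ι j n) :
    ∃ (t : Fin n → Tens ι (j.comp ι)) (f : Fin n → A),
      (∀ k b, lact ι (j.comp ι) b (t k) = ract ι (j.comp ι) (j b) (t k)) ∧
      (∀ k c, Commute (j (ι c)) (f k)) ∧
      ∑ k, ract ι (j.comp ι) (f k) (t k) = tmul ι (j.comp ι) 1 1 := by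
  obtain ⟨I, P, hIl, hIr, hPl, hPr, hPI⟩ := hH
  refine ⟨fun k => P (Pi.single k 1), fun k => I (tmul ι (j.comp ι) 1 1) k, fun k b => ?_,
    fun k => commute_map_tmul_one_one (ψ := (Pi.evalAddMonoidHom _ k).comp I)
      (fun b t => congrFun (hIl b t) k) (fun a t => congrFun (hIr a t) k), ?_⟩
  · rw [lact_map_single_one hPl, ract_map_single_one hPr]
  · simp only [ract_map_single_one hPr]
    rw [← map_sum, Finset.univ_sum_single, hPI]

end Tower

section TensorPowerActions

variable (A : Type*) [Ring A]

theorem lactZ_add : ∀ (m : ℕ) (a a' : A) (z : Zc A m),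
    lactZ A m (a + a') z = lactZ A m a z + lactZ A m a' z
  | 0, a, a', z => add_mul a a' z
  | m + 1, a, a', z => by
      induction z using TensorProduct.induction_on with
      | zero => erw [map_zero, add_zero]
      | tmul x y => rw [lactZ_succ, lactZ_succ, lactZ_succ, add_mul, TensorProduct.add_tmul]; rfl
      | add u v hu hv => erw [map_add, map_add, map_add, hu, hv]; abel

theorem lactZ_mul : ∀ (m : ℕ) (a a' : A) (z : Zc A m),
    lactZ A m (a * a') z = lactZ A m a (lactZ A m a' z)
  | 0, a, a', z => mul_assoc a a' z
  | m + 1, a, a', z => by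
      induction z using TensorProduct.induction_on with
      | zero => erw [map_zero]
      | tmul x y => rw [lactZ_succ, lactZ_succ, lactZ_succ, mul_assoc]
      | add u v hu hv => erw [map_add, map_add, map_add, hu, hv]

theorem lactZ_one : ∀ (m : ℕ) (z : Zc A m), lactZ A m 1 z = z
  | 0, z => one_mul (M := A) z
  | m + 1, z => by
      induction z using TensorProduct.induction_on with
      | zero => erw [map_zero]; rfl
      | tmul x y => rw [lactZ_succ, one_mul]
      | add u v hu hv => erw [map_add, hu, hv]; rfl

end TensorPowerActions

namespace XP

section Basic

variable {A : Type*} [Ring A] {B' : Type*} [Ring B'] (h : B' →+* A) (m : ℕ)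

def mk : Zc A m →+ XP A h m := (relZ A h m).mkQ.toAddMonoidHom

theorem mk_surjective : Function.Surjective (mk h m) := Submodule.Quotient.mk_surjective _

variable {h m}

@[simp] theorem qlact_mk (a : A) (z : Zc A m) : qlact A h m a (mk h m z) = mk h m (lactZ A m a z) :=
  rfl

@[simp] theorem qract_mk (a : A) (z : Zc A m) : qract A h m a (mk h m z) = mk h m (ractZ A m a z) :=
  rfl

theorem qlact_add (a a' : A) (x : XP A h m) :
    qlact A h m (a + a') x = qlact A h m a x + qlact A h m a' x := by
  obtain ⟨z, rfl⟩ := mk_surjective h m x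
  simp only [qlact_mk, lactZ_add, map_add]

theorem qlact_zero (x : XP A h m) : qlact A h m 0 x = 0 := by
  simpa using qlact_add (0 : A) 0 x

theorem qlact_mul (a a' : A) (x : XP A h m) :
    qlact A h m (a * a') x = qlact A h m a (qlact A h m a' x) := by
  obtain ⟨z, rfl⟩ := mk_surjective h m x
  simp only [qlact_mk, lactZ_mul]

theorem qlact_one (x : XP A h m) : qlact A h m 1 x = x := by
  obtain ⟨z, rfl⟩ := mk_surjective h m x
  rw [qlact_mk, lactZ_one]

theorem qlact_qract (a a' : A) (x : XP A h m) :
    qlact A h m a (qract A h m a' x) = qract A h m a' (qlact A h m a x) := by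
  obtain ⟨z, rfl⟩ := mk_surjective h m x
  simp only [qlact_mk, qract_mk, commZ]

variable (h m)

def cons : A →+ XP A h m →+ XP A h (m + 1) :=
  AddMonoidHom.mk'
    (fun a => (Submodule.mapQ (relZ A h m) (relZ A h (m + 1)) (TensorProduct.mk ℤ A (Zc A m) a)
      (fun _ hz => Submodule.subset_span (Or.inr ⟨a, _, hz, rfl⟩))).toAddMonoidHom)
    (fun a a' => by
      ext x
      obtain ⟨z, rfl⟩ := mk_surjective h m x
      exact congrArg (mk h (m + 1)) (TensorProduct.add_tmul a a' z))

variable {h m}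

theorem cons_mk (a : A) (z : Zc A m) : cons h m a (mk h m z) = mk h (m + 1) (a ⊗ₜ[ℤ] z) := rfl

theorem cons_mul_apply (a : A) (b : B') (x : XP A h m) :
    cons h m (a * h b) x = cons h m a (qlact A h m (h b) x) := by
  obtain ⟨z, rfl⟩ := mk_surjective h m x
  exact (Submodule.Quotient.eq _).2 (Submodule.subset_span (Or.inl ⟨a, b, z, rfl⟩))

theorem qlact_cons (a a' : A) (x : XP A h m) :
    qlact A h (m + 1) a' (cons h m a x) = cons h m (a' * a) x := by
  obtain ⟨z, rfl⟩ := mk_surjective h m x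
  rfl

theorem qract_cons (a a' : A) (x : XP A h m) :
    qract A h (m + 1) a' (cons h m a x) = cons h m a (qract A h m a' x) := by
  obtain ⟨z, rfl⟩ := mk_surjective h m x
  rfl

theorem induction_on {p : XP A h (m + 1) → Prop} (x : XP A h (m + 1)) (zero : p 0)
    (cons : ∀ a y, p (cons h m a y)) (add : ∀ x y, p x → p y → p (x + y)) : p x := by
  obtain ⟨z, rfl⟩ := mk_surjective h (m + 1) x
  induction z using TensorProduct.induction_on with
  | zero => exact zero
  | tmul a z => exact cons a (mk h m z)
  | add u v hu hv => exact (congrArg p (map_add (mk h (m + 1)) u v)).mpr (add _ _ hu hv)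

variable {P : Type*} [AddCommGroup P]

/-- The universal property of `XP A h (m + 1) = A ⊗_{B'} XP A h m`. -/
def lift (φ : A →+ XP A h m →+ P)
    (hφ : ∀ (a : A) (b : B') (x : XP A h m), φ (a * h b) x = φ a (qlact A h m (h b) x)) :
    XP A h (m + 1) →+ P :=
  let φ' : A ⊗[ℤ] Zc A m →+ P := TensorProduct.liftAddHom (φ.compl₂ (mk h m)) fun r a z => by
    rw [AddMonoidHom.compl₂_apply, AddMonoidHom.compl₂_apply, map_zsmul,
      AddMonoidHom.smul_apply, ← map_zsmul (φ a), ← map_zsmul (mk h m)]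
    exact congrArg (fun w => φ a (mk h m w)) (int_smul_eq_zsmul (ZM A m).isModule r z).symm
  (Submodule.liftQ (relZ A h (m + 1)) φ'.toIntLinearMap (by
    rw [relZ_succ]; erw [Submodule.span_le]
    rintro x (⟨a, b, z, rfl⟩ | ⟨a, z, hz, rfl⟩)
    · show φ' ((a * h b) ⊗ₜ[ℤ] z - a ⊗ₜ[ℤ] (lactZ A m (h b) z)) = 0
      rw [map_sub, TensorProduct.liftAddHom_tmul, TensorProduct.liftAddHom_tmul,
        AddMonoidHom.compl₂_apply, AddMonoidHom.compl₂_apply, hφ, qlact_mk, sub_self]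
    · show φ' (a ⊗ₜ[ℤ] z) = 0
      rw [TensorProduct.liftAddHom_tmul, AddMonoidHom.compl₂_apply,
        show mk h m z = 0 from (Submodule.Quotient.mk_eq_zero _).2 hz, map_zero])).toAddMonoidHom

@[simp] theorem lift_cons (φ : A →+ XP A h m →+ P) (hφ) (a : A) (x : XP A h m) :
    lift φ hφ (cons h m a x) = φ a x := by
  obtain ⟨z, rfl⟩ := mk_surjective h m x
  rfl

end Basic

abbrev IsSummandOfPow (A : Type*) [Ring A] {B₁ B₂ : Type*} [Ring B₁] [Ring B₂]
    (h₁ : B₁ →+* A) (h₂ : B₂ →+* A) (m q : ℕ) : Prop :=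
  IsBimodSummandOfPow (qlact A h₁ m) (qract A h₁ m) (qlact A h₂ m) (qract A h₂ m) q

section Tower

variable {C B A : Type*} [Ring C] [Ring B] [Ring A] (ι : C →+* B) (j : B →+* A) {m : ℕ}

/-- `consTens t a x = a · t · x ∈ A ⊗_C X` for `t ∈ B ⊗_C A`, `X = XP A (j.comp ι) m`. -/
def consTens : Tens ι (j.comp ι) →+ A →+ XP A (j.comp ι) m →+ XP A (j.comp ι) (m + 1) :=
  NCT.lift ι (j.comp ι)
    (mkBilin
      (fun b a' => ((cons (j.comp ι) m).comp (AddMonoidHom.mulRight (j b))).compl₂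
        (qlact A (j.comp ι) m a'))
      (fun b b' a' => by ext a x; simp [mul_add])
      (fun b a' a'' => by ext a x; simp [qlact_add]))
    (fun b c a' => by
      ext a x
      simp only [mkBilin_apply, AddMonoidHom.compl₂_apply, AddMonoidHom.coe_comp,
        Function.comp_apply, AddMonoidHom.coe_mulRight, map_mul, ← mul_assoc]
      rw [qlact_mul]
      exact cons_mul_apply (h := j.comp ι) _ c _)

variable {ι j}

@[simp] theorem consTens_tmul (b : B) (a' a : A) (x : XP A (j.comp ι) m) :
    consTens ι j (tmul ι (j.comp ι) b a') a x = cons (j.comp ι) m (a * j b) (qlact A _ m a' x) :=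
  rfl

theorem consTens_one_one (a : A) (x : XP A (j.comp ι) m) :
    consTens ι j (tmul ι (j.comp ι) 1 1) a x = cons (j.comp ι) m a x := by
  rw [consTens_tmul, map_one, mul_one, qlact_one]

theorem consTens_lact (b : B) (t : Tens ι (j.comp ι)) (a : A) (x : XP A (j.comp ι) m) :
    consTens ι j (lact ι (j.comp ι) b t) a x = consTens ι j t (a * j b) x := by
  induction t using tens_induction with
  | zero => simp
  | tm b' a' => rw [lact_tmul, consTens_tmul, consTens_tmul, j.map_mul, mul_assoc]
  | add t t' ht ht' => simp only [map_add, AddMonoidHom.add_apply, ht, ht']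

theorem consTens_ract (a'' : A) (t : Tens ι (j.comp ι)) (a : A) (x : XP A (j.comp ι) m) :
    consTens ι j (ract ι (j.comp ι) a'' t) a x = consTens ι j t a (qlact A _ m a'' x) := by
  induction t using tens_induction with
  | zero => simp
  | tm b' a' => rw [ract_tmul, consTens_tmul, consTens_tmul, qlact_mul]
  | add t t' ht ht' => simp only [map_add, AddMonoidHom.add_apply, ht, ht']

theorem qlact_consTens (a'' : A) (t : Tens ι (j.comp ι)) (a : A) (x : XP A (j.comp ι) m) :
    qlact A _ (m + 1) a'' (consTens ι j t a x) = consTens ι j t (a'' * a) x := by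
  induction t using tens_induction with
  | zero => simp
  | tm b' a' => rw [consTens_tmul, consTens_tmul, qlact_cons, mul_assoc]
  | add t t' ht ht' => simp only [map_add, AddMonoidHom.add_apply, ht, ht']

theorem qract_consTens (a'' : A) (t : Tens ι (j.comp ι)) (a : A) (x : XP A (j.comp ι) m) :
    qract A _ (m + 1) a'' (consTens ι j t a x) = consTens ι j t a (qract A _ m a'' x) := by
  induction t using tens_induction with
  | zero => simp
  | tm b' a' => rw [consTens_tmul, consTens_tmul, qract_cons, qlact_qract]
  | add t t' ht ht' => simp only [map_add, AddMonoidHom.add_apply, ht, ht']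

variable (ι j) in
def descend (g : XP A (j.comp ι) m →+ XP A j m)
    (hg : ∀ (c : C) x, g (qlact A _ m (j (ι c)) x) = qlact A j m (j (ι c)) (g x)) :
    XP A (j.comp ι) (m + 1) →+ XP A j (m + 1) :=
  XP.lift ((cons j m).compl₂ g) fun a c x => by
    rw [AddMonoidHom.compl₂_apply, AddMonoidHom.compl₂_apply, RingHom.comp_apply,
      cons_mul_apply, hg]

variable (ι j) in
def ascend (t : Tens ι (j.comp ι))
    (ht : ∀ b, lact ι (j.comp ι) b t = ract ι (j.comp ι) (j b) t)
    (g : XP A j m →+ XP A (j.comp ι) m)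
    (hg : ∀ (b : B) y, g (qlact A j m (j b) y) = qlact A _ m (j b) (g y)) :
    XP A j (m + 1) →+ XP A (j.comp ι) (m + 1) :=
  XP.lift ((consTens ι j t).compl₂ g) fun a b y => by
    rw [AddMonoidHom.compl₂_apply, AddMonoidHom.compl₂_apply, ← consTens_lact, ht,
      consTens_ract, hg]

section Descend

variable {g : XP A (j.comp ι) m →+ XP A j m}
  {hg : ∀ (c : C) x, g (qlact A _ m (j (ι c)) x) = qlact A j m (j (ι c)) (g x)}

@[simp] theorem descend_cons (a : A) (x : XP A (j.comp ι) m) :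
    descend ι j g hg (cons _ m a x) = cons j m a (g x) :=
  lift_cons _ _ a x

theorem descend_qlact (a : A) (x : XP A (j.comp ι) (m + 1)) :
    descend ι j g hg (qlact A _ (m + 1) a x) = qlact A j (m + 1) a (descend ι j g hg x) := by
  induction x using induction_on with
  | zero => simp
  | cons a' y => rw [qlact_cons, descend_cons, descend_cons, qlact_cons]
  | add x y hx hy => rw [map_add, map_add, hx, hy, map_add, map_add]

theorem descend_qract (hgr : ∀ a x, g (qract A _ m a x) = qract A j m a (g x))
    (a : A) (x : XP A (j.comp ι) (m + 1)) :
    descend ι j g hg (qract A _ (m + 1) a x) = qract A j (m + 1) a (descend ι j g hg x) := by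
  induction x using induction_on with
  | zero => simp
  | cons a' y => rw [qract_cons, descend_cons, descend_cons, qract_cons, hgr]
  | add x y hx hy => rw [map_add, map_add, hx, hy, map_add, map_add]

end Descend

section Ascend

variable {t : Tens ι (j.comp ι)} {ht : ∀ b, lact ι (j.comp ι) b t = ract ι (j.comp ι) (j b) t}
  {g : XP A j m →+ XP A (j.comp ι) m}
  {hg : ∀ (b : B) y, g (qlact A j m (j b) y) = qlact A _ m (j b) (g y)}

@[simp] theorem ascend_cons (a : A) (y : XP A j m) :
    ascend ι j t ht g hg (cons j m a y) = consTens ι j t a (g y) :=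
  lift_cons _ _ a y

theorem ascend_qlact (a : A) (y : XP A j (m + 1)) :
    ascend ι j t ht g hg (qlact A j (m + 1) a y) =
      qlact A _ (m + 1) a (ascend ι j t ht g hg y) := by
  induction y using induction_on with
  | zero => simp
  | cons a' y => rw [qlact_cons, ascend_cons, ascend_cons, qlact_consTens]
  | add x y hx hy => rw [map_add, map_add, hx, hy, map_add, map_add]

theorem ascend_qract (hgr : ∀ a y, g (qract A j m a y) = qract A _ m a (g y))
    (a : A) (y : XP A j (m + 1)) :
    ascend ι j t ht g hg (qract A j (m + 1) a y) =
      qract A _ (m + 1) a (ascend ι j t ht g hg y) := by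
  induction y using induction_on with
  | zero => simp
  | cons a' y => rw [qract_cons, ascend_cons, ascend_cons, qract_consTens, hgr]
  | add x y hx hy => rw [map_add, map_add, hx, hy, map_add, map_add]

end Ascend

theorem comp_qlact_of_commute {g : XP A (j.comp ι) m →+ XP A j m}
    (hg : ∀ a x, g (qlact A _ m a x) = qlact A j m a (g x)) {f : A}
    (hf : ∀ c, Commute (j (ι c)) f) (c : C) (x : XP A (j.comp ι) m) :
    g.comp (qlact A _ m f) (qlact A _ m (j (ι c)) x) =
      qlact A j m (j (ι c)) (g.comp (qlact A _ m f) x) := by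
  rw [AddMonoidHom.comp_apply, AddMonoidHom.comp_apply, ← qlact_mul, ← (hf c).eq, qlact_mul, hg]

theorem descend_consTens {ψ : Tens ι (j.comp ι) →+ A}
    (hψl : ∀ (b : B) t, ψ (lact ι (j.comp ι) b t) = j b * ψ t)
    (hψr : ∀ (a : A) t, ψ (ract ι (j.comp ι) a t) = ψ t * a)
    {g : XP A (j.comp ι) m →+ XP A j m} (hg : ∀ a x, g (qlact A _ m a x) = qlact A j m a (g x))
    (t : Tens ι (j.comp ι)) (a : A) (x : XP A (j.comp ι) m) :
    descend ι j (g.comp (qlact A _ m (ψ (tmul ι (j.comp ι) 1 1))))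
        (comp_qlact_of_commute hg (commute_map_tmul_one_one hψl hψr)) (consTens ι j t a x) =
      cons j m a (g (qlact A _ m (ψ t) x)) := by
  induction t using tens_induction with
  | zero => simp [qlact_zero]
  | tm b a' =>
      rw [consTens_tmul, descend_cons, AddMonoidHom.comp_apply, cons_mul_apply, ← hg,
        map_tmul_eq_mul_map_tmul_one_one hψl hψr b a', qlact_mul, qlact_mul]
  | add t t' ht ht' => simp only [map_add, AddMonoidHom.add_apply, ht, ht', qlact_add]

theorem isSummandOfPow_succ_of_separable {t : Tens ι (j.comp ι)}
    (ht : ∀ b, lact ι (j.comp ι) b t = ract ι (j.comp ι) (j b) t) {π : Tens ι (j.comp ι) →+ A}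
    (hπl : ∀ (b : B) x, π (lact ι (j.comp ι) b x) = j b * π x)
    (hπr : ∀ (a : A) x, π (ract ι (j.comp ι) a x) = π x * a) (hπt : π t = 1) {q : ℕ}
    (hm : IsSummandOfPow A j (j.comp ι) m q) : IsSummandOfPow A j (j.comp ι) (m + 1) q := by
  obtain ⟨i, p, hil, hir, hpl, hpr, hpi⟩ := hm
  have hpl' : ∀ (l : Fin q) a x, (p.comp (AddMonoidHom.single _ l)) (qlact A _ m a x) =
      qlact A j m a ((p.comp (AddMonoidHom.single _ l)) x) :=
    fun l a x => map_single_of_map_comp (hpl a) l x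
  have hpr' : ∀ (l : Fin q) a x, (p.comp (AddMonoidHom.single _ l)) (qract A _ m a x) =
      qract A j m a ((p.comp (AddMonoidHom.single _ l)) x) :=
    fun l a x => map_single_of_map_comp (hpr a) l x
  let φ (l : Fin q) := ascend ι j t ht ((Pi.evalAddMonoidHom _ l).comp i)
    fun b y => congrFun (hil (j b) y) l
  let ψ (l : Fin q) := descend ι j ((p.comp (AddMonoidHom.single _ l)).comp
    (qlact A _ m (π (tmul ι (j.comp ι) 1 1))))
    (comp_qlact_of_commute (hpl' l) (commute_map_tmul_one_one hπl hπr))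
  have hψφ : ∀ x, ∑ l, ψ l (φ l x) = x := by
    intro x
    induction x using induction_on with
    | zero => simp
    | cons a y =>
        calc ∑ l, ψ l (φ l (cons j m a y)) = ∑ l, cons j m a (p (Pi.single l (i y l))) := by
              refine Finset.sum_congr rfl fun l _ => ?_
              rw [show φ l (cons j m a y) = consTens ι j t a (i y l) from ascend_cons a y,
                descend_consTens hπl hπr (hpl' l), hπt, qlact_one]
              rfl
          _ = cons j m a y := by rw [← map_sum, ← map_sum, Finset.univ_sum_single, hpi]
    | add x y hx hy => simp only [map_add, Finset.sum_add_distrib, hx, hy]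
  simpa using IsBimodSummandOfPow.of_sum φ ψ
    (fun _ => ascend_qlact) (fun l => ascend_qract fun a y => congrFun (hir a y) l)
    (fun _ => descend_qlact)
    (fun l => descend_qract fun a x => by
      rw [AddMonoidHom.comp_apply, qlact_qract]
      exact hpr' l a _)
    hψφ

theorem isSummandOfPow_succ_of_hSeparable {n : ℕ} {t : Fin n → Tens ι (j.comp ι)}
    (ht : ∀ k b, lact ι (j.comp ι) b (t k) = ract ι (j.comp ι) (j b) (t k)) {f : Fin n → A}
    (hf : ∀ k c, Commute (j (ι c)) (f k))
    (hsum : ∑ k, ract ι (j.comp ι) (f k) (t k) = tmul ι (j.comp ι) 1 1) {r : ℕ}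
    (hm : IsSummandOfPow A (j.comp ι) j m r) : IsSummandOfPow A (j.comp ι) j (m + 1) (n * r) := by
  obtain ⟨i, p, hil, hir, hpl, hpr, hpi⟩ := hm
  have hpl' : ∀ (l : Fin r) (a : A) y, (p.comp (AddMonoidHom.single _ l)) (qlact A j m a y) =
      qlact A _ m a ((p.comp (AddMonoidHom.single _ l)) y) :=
    fun l a y => map_single_of_map_comp (hpl a) l y
  let φ (kl : Fin n × Fin r) : XP A (j.comp ι) (m + 1) →+ XP A j (m + 1) :=
    descend ι j (((Pi.evalAddMonoidHom _ kl.2).comp i).comp (qlact A _ m (f kl.1)))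
      (comp_qlact_of_commute (fun a x => congrFun (hil a x) kl.2) (hf kl.1))
  let ψ (kl : Fin n × Fin r) : XP A j (m + 1) →+ XP A (j.comp ι) (m + 1) :=
    ascend ι j (t kl.1) (ht kl.1) (p.comp (AddMonoidHom.single (fun _ => XP A j m) kl.2))
      fun b y => hpl' kl.2 (j b) y
  have hψφ : ∀ x, ∑ kl, ψ kl (φ kl x) = x := by
    intro x
    induction x using induction_on with
    | zero => simp
    | cons a x =>
        calc ∑ kl, ψ kl (φ kl (cons _ m a x))
            = ∑ k, ∑ l, consTens ι j (t k) a (p (Pi.single l (i (qlact A _ m (f k) x) l))) := by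
              rw [Fintype.sum_prod_type]
              refine Finset.sum_congr rfl fun k _ => Finset.sum_congr rfl fun l _ => ?_
              exact (congrArg (ψ (k, l)) (descend_cons a x)).trans (ascend_cons a _)
          _ = ∑ k, consTens ι j (ract ι (j.comp ι) (f k) (t k)) a x := by
              refine Finset.sum_congr rfl fun k _ => ?_
              rw [← map_sum, ← map_sum, Finset.univ_sum_single, hpi, consTens_ract]
          _ = cons _ m a x := by
              rw [← AddMonoidHom.finsetSum_apply, ← AddMonoidHom.finsetSum_apply, ← map_sum,
                hsum, consTens_one_one]
    | add x y hx hy => simp only [map_add, Finset.sum_add_distrib, hx, hy]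
  simpa using IsBimodSummandOfPow.of_sum φ ψ
    (fun _ => descend_qlact)
    (fun kl => descend_qract fun a x => by
      rw [AddMonoidHom.comp_apply, qlact_qract]
      exact congrFun (hir a _) kl.2)
    (fun _ => ascend_qlact)
    (fun kl => ascend_qract fun a y => map_single_of_map_comp (hpr a) kl.2 y)
    hψφ

end Tower

end XP

/-- `XP A j m` is the `(m + 1)`-fold power `A^{⊗_B (m+1)}`, so all powers with at least one
factor are covered. -/
theorem tensorPowers_hEquivalent_general
    {C B A : Type*} [Ring C] [Ring B] [Ring A]
    (ι : C →+* B) (j : B →+* A)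
    (hHsep : ∃ n, LeftRelHSep ι j n)
    (hsep : ∃ (i : A →+ Tens ι (j.comp ι)) (p : Tens ι (j.comp ι) →+ A),
      (∀ (b : B) (a : A), i (j b * a) = lact ι (j.comp ι) b (i a)) ∧
      (∀ (a a' : A), i (a * a') = ract ι (j.comp ι) a' (i a)) ∧
      (∀ (b : B) x, p (lact ι (j.comp ι) b x) = j b * p x) ∧
      (∀ (a : A) x, p (ract ι (j.comp ι) a x) = p x * a) ∧
      ∀ a, p (i a) = a) :
    ∀ m : ℕ,
      (∃ (q : ℕ) (i : XP A j m →+ (Fin q → XP A (j.comp ι) m))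
        (p : (Fin q → XP A (j.comp ι) m) →+ XP A j m),
        (∀ (a : A) x, i (qlact A j m a x) = fun k => qlact A (j.comp ι) m a (i x k)) ∧
        (∀ (a : A) x, i (qract A j m a x) = fun k => qract A (j.comp ι) m a (i x k)) ∧
        (∀ (a : A) v, p (fun k => qlact A (j.comp ι) m a (v k)) = qlact A j m a (p v)) ∧
        (∀ (a : A) v, p (fun k => qract A (j.comp ι) m a (v k)) = qract A j m a (p v)) ∧
        ∀ x, p (i x) = x) ∧
      (∃ (r : ℕ) (i : XP A (j.comp ι) m →+ (Fin r → XP A j m))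
        (p : (Fin r → XP A j m) →+ XP A (j.comp ι) m),
        (∀ (a : A) x, i (qlact A (j.comp ι) m a x) = fun k => qlact A j m a (i x k)) ∧
        (∀ (a : A) x, i (qract A (j.comp ι) m a x) = fun k => qract A j m a (i x k)) ∧
        (∀ (a : A) v, p (fun k => qlact A j m a (v k)) = qlact A (j.comp ι) m a (p v)) ∧
        (∀ (a : A) v, p (fun k => qract A j m a (v k)) = qract A (j.comp ι) m a (p v)) ∧
        ∀ x, p (i x) = x) := by
  obtain ⟨n, hHsep⟩ := hHsep
  obtain ⟨t, f, ht, hf, hsum⟩ := hHsep.exists_sum_ract_eq_tmul_one_one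
  obtain ⟨σ, π, hσl, hσr, hπl, hπr, hπσ⟩ := hsep
  have hσ₁ : ∀ b, lact ι (j.comp ι) b (σ 1) = ract ι (j.comp ι) (j b) (σ 1) := fun b => by
    rw [← hσl, ← hσr, mul_one, one_mul]
  intro m
  induction m with
  | zero => exact ⟨⟨1, IsBimodSummandOfPow.refl _ _⟩, ⟨1, IsBimodSummandOfPow.refl _ _⟩⟩
  | succ m ih =>
      obtain ⟨⟨q, hq⟩, ⟨r, hr⟩⟩ := ih
      exact ⟨⟨q, XP.isSummandOfPow_succ_of_separable hσ₁ hπl hπr (hπσ 1) hq⟩,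
        ⟨n * r, XP.isSummandOfPow_succ_of_hSeparable ht hf hsum hr⟩⟩

/-- in a tower `A ⊇ B ⊇ C` which is both left relative H-separable
(`B ⊗_C A ⊕ * ≅ A^n` as `B`-`A`-bimodules) and left relative separable
(`A ⊕ * ≅ B ⊗_C A` as `B`-`A`-bimodules), for every `m ≥ 1` the tensor powers
`A^{⊗_B m}` and `A^{⊗_C m}` are H-equivalent as `A`-`A`-bimodules.  (Below, `XP A j m`
denotes the `(m+1)`-fold power `A^{⊗_B (m+1)}`, so all powers with at least one factor
are covered.) -/
theorem tensorPowers_hEquivalent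
    {C B A : Type*} [Ring C] [Ring B] [Ring A]
    (ι : C →+* B) (j : B →+* A)
    (hι : Function.Injective ι) (hj : Function.Injective j)
    (hHsep : ∃ n, LeftRelHSep ι j n)
    (hsep : ∃ (i : A →+ Tens ι (j.comp ι)) (p : Tens ι (j.comp ι) →+ A),
      (∀ (b : B) (a : A), i (j b * a) = lact ι (j.comp ι) b (i a)) ∧
      (∀ (a a' : A), i (a * a') = ract ι (j.comp ι) a' (i a)) ∧
      (∀ (b : B) x, p (lact ι (j.comp ι) b x) = j b * p x) ∧
      (∀ (a : A) x, p (ract ι (j.comp ι) a x) = p x * a) ∧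
      ∀ a, p (i a) = a) :
    ∀ m : ℕ,
      (∃ (q : ℕ) (i : XP A j m →+ (Fin q → XP A (j.comp ι) m))
        (p : (Fin q → XP A (j.comp ι) m) →+ XP A j m),
        (∀ (a : A) x, i (qlact A j m a x) = fun k => qlact A (j.comp ι) m a (i x k)) ∧
        (∀ (a : A) x, i (qract A j m a x) = fun k => qract A (j.comp ι) m a (i x k)) ∧
        (∀ (a : A) v, p (fun k => qlact A (j.comp ι) m a (v k)) = qlact A j m a (p v)) ∧
        (∀ (a : A) v, p (fun k => qract A (j.comp ι) m a (v k)) = qract A j m a (p v)) ∧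
        ∀ x, p (i x) = x) ∧
      (∃ (r : ℕ) (i : XP A (j.comp ι) m →+ (Fin r → XP A j m))
        (p : (Fin r → XP A j m) →+ XP A (j.comp ι) m),
        (∀ (a : A) x, i (qlact A (j.comp ι) m a x) = fun k => qlact A j m a (i x k)) ∧
        (∀ (a : A) x, i (qract A (j.comp ι) m a x) = fun k => qract A j m a (i x k)) ∧
        (∀ (a : A) v, p (fun k => qlact A j m a (v k)) = qlact A (j.comp ι) m a (p v)) ∧
        (∀ (a : A) v, p (fun k => qract A j m a (v k)) = qract A (j.comp ι) m a (p v)) ∧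
        ∀ x, p (i x) = x) :=
  tensorPowers_hEquivalent_general ι j hHsep hsep

end
end

section
/- Let G > H > J be a tower of finite groups and A = ℂG ⊇ B = ℂH ⊇ C = ℂJ the corresponding complex group algebras. If the tower is left relative H-separable (B ⊗_C A ⊕ * ≅ A^n as B-A-bimodules for some n), then H = J. -/
/-!  A noncommutative relative tensor product `L ⊗_C R` for a ring `C` mapping
into rings `L` (acting on the right through `f`) and `R` (acting on the left
through `g`), together with the outer left `L`-action `lact`, the outer right
`R`-action `ract`, a lifting principle for balanced biadditive maps, and the
multiplication map. -/

open scoped TensorProduct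

noncomputable section
open NCT

/-! Let `S = ∑ g` in `k[G]`. The elements `h ⊗ S` of `k[H] ⊗_{k[J]} k[G]` are fixed by right
multiplication by `G`. A bimodule embedding into `k[G]ⁿ` sends them to vectors of right
`G`-invariant elements, which are multiples of `S` and so also left invariant; hence
`h ⊗ S = h • (1 ⊗ S) = 1 ⊗ S` for every `h ∈ H`. But the coordinate of the `J`-orbit of `1 ⊗ 1`
takes the value `1` on `h ⊗ S` when `h ∈ J` and `0` otherwise, so `H ≤ J`. -/

namespace LeftRelHSep

variable {C B A : Type*} [Ring C] [Ring B] [Ring A] {ι : C →+* B} {j : B →+* A} {n : ℕ}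

/-- `B ⊗_C A` is a bimodule direct summand of `Aⁿ`, so it inherits this property of `A`. -/
theorem lact_eq_self (hsep : LeftRelHSep ι j n) {s : Set A} {b : B}
    (hb : ∀ a : A, (∀ g ∈ s, a * g = a) → j b * a = a) {x : Tens ι (j.comp ι)}
    (hx : ∀ g ∈ s, ract ι (j.comp ι) g x = x) :
    lact ι (j.comp ι) b x = x := by
  obtain ⟨i, p, hil, hir, -, -, hpi⟩ := hsep
  have hix : i (lact ι (j.comp ι) b x) = i x := by
    rw [hil]
    funext k
    exact hb _ fun g hg => by rw [← congrFun (hir g x) k, hx g hg]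
  rw [← hpi (lact ι (j.comp ι) b x), hix, hpi]

end LeftRelHSep

namespace MonoidAlgebra

variable {k G : Type*} [Ring k]

theorem single_one_mul_eq_self_of_forall_mul_single_one [Group G] {a : MonoidAlgebra k G}
    (ha : ∀ g : G, a * single g 1 = a) (h : G) : single h 1 * a = a := by
  ext y
  have hy := congrArg (fun a => a.coeff y) (ha (y⁻¹ * h * y))
  simp only [coeff_mul_single_apply, mul_one] at hy
  rw [coeff_single_mul_apply, one_mul, ← hy]
  congr 1
  group

def sumSingleOne [Fintype G] : MonoidAlgebra k G := ∑ g : G, single g 1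

theorem sumSingleOne_mul_single_one [Group G] [Fintype G] (g : G) :
    sumSingleOne * single g (1 : k) = sumSingleOne := by
  simp only [sumSingleOne, Finset.sum_mul, single_mul_single, mul_one]
  exact Fintype.sum_equiv (Equiv.mulRight g) _ _ fun _ => rfl

theorem coeff_sumSingleOne [Fintype G] (g : G) :
    (sumSingleOne : MonoidAlgebra k G).coeff g = 1 := by
  classical
  simp [sumSingleOne, coeff_single, Finsupp.single_apply]

open Classical in
def restrictSubgroup [Group G] (K : Subgroup G) : MonoidAlgebra k G →+ MonoidAlgebra k G :=
  coeffAddEquiv.symm.toAddMonoidHom.comp <|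
    (Finsupp.filterAddHom (· ∈ K)).comp coeffAddEquiv.toAddMonoidHom

open Classical in
theorem restrictSubgroup_single [Group G] (K : Subgroup G) (g : G) (r : k) :
    restrictSubgroup K (single g r) = if g ∈ K then single g r else 0 := by
  ext1
  split_ifs with hg
  · exact Finsupp.filter_single_of_pos _ hg
  · exact Finsupp.filter_single_of_neg _ hg

theorem restrictSubgroup_mul_mapDomain_subtype [Group G] (K : Subgroup G)
    (y : MonoidAlgebra k G) (c : MonoidAlgebra k K) :
    restrictSubgroup K (y * mapDomainRingHom k K.subtype c) =
      restrictSubgroup K y * mapDomainRingHom k K.subtype c := by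
  classical
  induction y using induction_linear with
  | zero => simp
  | add y y' hy hy' => rw [add_mul, map_add, map_add, hy, hy', add_mul]
  | single g r =>
    induction c using induction_linear with
    | zero => simp
    | add c c' hc hc' => rw [map_add, mul_add, map_add, hc, hc', mul_add]
    | single x s =>
      simp only [mapDomainRingHom_apply, mapDomain_single, single_mul_single,
        restrictSubgroup_single, Subgroup.coe_subtype, K.mul_mem_cancel_right x.2]
      split_ifs <;> simp

end MonoidAlgebra

open MonoidAlgebra

section GroupAlgebraTower

variable {k G : Type*} [Ring k] [Group G] {H J : Subgroup G} (hJH : J ≤ H)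

local notation "ι" => mapDomainRingHom k (Subgroup.inclusion hJH)
local notation "ȷ" => mapDomainRingHom k H.subtype

theorem tmul_single_sumSingleOne_eq_of_leftRelHSep [Fintype G] {n : ℕ}
    (hsep : LeftRelHSep ι ȷ n) (h : H) :
    tmul ι (ȷ.comp ι) (single h 1) sumSingleOne = tmul ι (ȷ.comp ι) 1 sumSingleOne := by
  have hb (a : MonoidAlgebra k G)
      (ha : ∀ g ∈ Set.range fun g : G => single g (1 : k), a * g = a) :
      ȷ (single h 1) * a = a := by
    rw [mapDomainRingHom_apply, mapDomain_single]
    exact single_one_mul_eq_self_of_forall_mul_single_one (fun g => ha _ ⟨g, rfl⟩) h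
  have hx : ∀ g ∈ Set.range fun g : G => single g (1 : k),
      ract ι (ȷ.comp ι) g (tmul ι (ȷ.comp ι) 1 sumSingleOne) =
        tmul ι (ȷ.comp ι) 1 sumSingleOne := by
    rintro _ ⟨g, rfl⟩
    exact congrArg (tmul ι (ȷ.comp ι) 1) (sumSingleOne_mul_single_one g)
  simpa only [lact_tmul, mul_one] using hsep.lact_eq_self hb hx

/-- In the basis of `k[H] ⊗_{k[J]} k[G]` given by the `J`-orbits of the pairs `h ⊗ g`, this is
the coordinate of the orbit of `1 ⊗ 1`. -/
def orbitOneCoord : Tens ι (ȷ.comp ι) →+ k :=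
  lift ι (ȷ.comp ι)
    (mkBilin (fun b a => (restrictSubgroup J (ȷ b) * a).coeff 1)
      (fun b b' a => by rw [map_add, map_add, add_mul, coeff_add, Finsupp.add_apply])
      (fun b a a' => by rw [mul_add, coeff_add, Finsupp.add_apply]))
    (fun b c a => by
      have hcomp : ȷ (ι c) = mapDomainRingHom k J.subtype c := by
        rw [← RingHom.comp_apply, ← mapDomainRingHom_comp, Subgroup.subtype_comp_inclusion]
      simp only [mkBilin_apply, RingHom.comp_apply, map_mul, hcomp,
        restrictSubgroup_mul_mapDomain_subtype, mul_assoc])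

open Classical in
theorem orbitOneCoord_tmul_single_sumSingleOne [Fintype G] (h : H) :
    orbitOneCoord hJH (tmul ι (ȷ.comp ι) (single h 1) sumSingleOne) =
      if (h : G) ∈ J then 1 else 0 := by
  show (restrictSubgroup J (ȷ (single h 1)) * sumSingleOne).coeff 1 = _
  rw [mapDomainRingHom_apply, mapDomain_single, Subgroup.coe_subtype, restrictSubgroup_single]
  split_ifs
  · rw [coeff_single_mul_apply, coeff_sumSingleOne, one_mul]
  · rw [zero_mul, coeff_zero, Finsupp.zero_apply]

theorem Subgroup.eq_of_leftRelHSep_monoidAlgebra [Nontrivial k] [Fintype G] {n : ℕ}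
    (hsep : LeftRelHSep ι ȷ n) : J = H := by
  refine le_antisymm hJH fun g hg => ?_
  have hcoord := congrArg (orbitOneCoord hJH)
    (tmul_single_sumSingleOne_eq_of_leftRelHSep hJH hsep ⟨g, hg⟩)
  rw [one_def, orbitOneCoord_tmul_single_sumSingleOne, orbitOneCoord_tmul_single_sumSingleOne,
    if_pos (show ((1 : H) : G) ∈ J from J.one_mem)] at hcoord
  by_contra hgJ
  exact zero_ne_one ((if_neg hgJ).symm.trans hcoord)

end GroupAlgebraTower

/-- for a tower of finite groups `G > H > J` and the complex group
algebras `ℂG ⊇ ℂH ⊇ ℂJ`, if the tower is left relative H-separable then `H = J`. -/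
theorem groupAlgebra_relHSep_trivial
    {G : Type*} [Group G] [Fintype G] (H J : Subgroup G) (hJH : J ≤ H)
    (hH : ∃ n, LeftRelHSep
      (MonoidAlgebra.mapDomainRingHom ℂ (Subgroup.inclusion hJH))
      (MonoidAlgebra.mapDomainRingHom ℂ H.subtype) n) :
    J = H :=
  let ⟨_, hsep⟩ := hH
  Subgroup.eq_of_leftRelHSep_monoidAlgebra hJH hsep

end
end
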